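/- arXiv:2104.05701 — 3 statements merged into one kernel-verified Lean document; each statement's English description precedes it below -/
import Mathlib

section
/- For every f ∈ Θ_{k,n} and every α = (a,b) ∈ [k-1]×[n-1] with a/b = k/n, the point α belongs to the inversion multiset F'(f). -/
/-!
Write `x s = f^[s] 0`. The displacement `f m - m` depends only on `m mod n`, and the orbit of `0`
meets every residue once, so `x n - x 0` is the total displacement over a period, namely `k * n`;
hence `x (s + n) = x s + k * n`. The differences `u r = x (r + b) - x r - a * n` never vanish (as
`0 < b < n`) and sum to `n * (b * k - a * n) = 0` over a period, so `u r < 0 < u (r + 1)` for some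
`r`. Up to translation by a multiple of `n`, `i = x (r + b)` and `j = x r + a * n` then form an
inversion of `f`, and resolving it closes the orbit `f j, f^[2] j, …, f^[b] j = i + a * n` into a
cycle of length `b`, whose winding number is `a` by the same displacement count.
-/

open Finset

/-- `f : ℤ → ℤ` is an `n`-periodic affine permutation. -/
def IsAffinePerm (n : ℕ) (f : ℤ → ℤ) : Prop :=
  Function.Bijective f ∧ ∀ i : ℤ, f (i + (n : ℤ)) = f i + (n : ℤ)

/-- Boundedness condition `i ≤ f i ≤ i + n`. -/
def IsBoundedFn (n : ℕ) (f : ℤ → ℤ) : Prop :=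
  ∀ i : ℤ, i ≤ f i ∧ f i ≤ i + (n : ℤ)

/-- Bounded affine permutation. -/
def IsBAP (n : ℕ) (f : ℤ → ℤ) : Prop := IsAffinePerm n f ∧ IsBoundedFn n f

/-- The orbit of the residue of `a` under the reduction of `f` modulo `n`. -/
def orbitF (n : ℕ) (f : ℤ → ℤ) (a : ℤ) : Finset ℤ :=
  (Finset.range n).image (fun r => (f^[r] a) % (n : ℤ))

/-- The reduction of `f` modulo `n` is an `n`-cycle. -/
def IsCycleMod (n : ℕ) (f : ℤ → ℤ) : Prop :=
  ∀ j : ℤ, ∃ r : ℕ, r < n ∧ (f^[r] 0) % (n : ℤ) = j % (n : ℤ)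

/-- The winding number `k(f̄) = #{i ∈ [1,n] : f̄(i) < i} = #{i ∈ [1,n] : f(i) > n}`. -/
noncomputable def winding (n : ℕ) (f : ℤ → ℤ) : ℕ :=
  ((Finset.Icc (1 : ℤ) (n : ℤ)).filter (fun i => (n : ℤ) < f i)).card

/-- `f ∈ Θ_{k,n}`: a bounded affine permutation whose reduction modulo `n`
is an `n`-cycle with winding number `k`. -/
def IsTheta (k n : ℕ) (f : ℤ → ℤ) : Prop :=
  IsBAP n f ∧ IsCycleMod n f ∧ winding n f = k

/-- Inversions of `f`: pairs `i < j` with `f(i) > f(j)` and `i ∈ [n]`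
(for a bounded affine permutation all inversions lie in the indicated box). -/
noncomputable def inversions (n : ℕ) (f : ℤ → ℤ) : Finset (ℤ × ℤ) :=
  ((Finset.Icc (1 : ℤ) (n : ℤ)) ×ˢ (Finset.Icc (1 : ℤ) (3 * (n : ℤ)))).filter
    (fun p => p.1 < p.2 ∧ f p.2 < f p.1)

/-- The length `ℓ(f)`, i.e. the number of inversions. -/
noncomputable def alen (n : ℕ) (f : ℤ → ℤ) : ℕ := (inversions n f).card

/-- The number of cycles of the reduction of `f` modulo `n`. -/
def numCycles (n : ℕ) (f : ℤ → ℤ) : ℕ :=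
  ((Finset.range n).image (fun a : ℕ => orbitF n f (a : ℤ))).card

/-- The affine simple transposition `s_i`, swapping `i + rn` and `i + 1 + rn` for all `r`. -/
def sT (n : ℕ) (i : ℤ) (j : ℤ) : ℤ :=
  if j % (n : ℤ) = i % (n : ℤ) then j + 1
  else if j % (n : ℤ) = (i + 1) % (n : ℤ) then j - 1
  else j

/-- `s_i f`. -/
def mulS (n : ℕ) (i : ℤ) (f : ℤ → ℤ) : ℤ → ℤ := fun m => sT n i (f m)

/-- `f s_i`. -/
def smulS (n : ℕ) (i : ℤ) (f : ℤ → ℤ) : ℤ → ℤ := fun m => f (sT n i m)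

/-- `s_i f s_i`. -/
def conjS (n : ℕ) (i : ℤ) (f : ℤ → ℤ) : ℤ → ℤ := fun m => sT n i (f (sT n i m))

/-- The cyclic shift `σ`. -/
def cshift (f : ℤ → ℤ) : ℤ → ℤ := fun i => f (i - 1) + 1

/-- Resolving the crossing `(i,j)`: swap the values `f(i)` and `f(j)` `n`-periodically. -/
def resolve (n : ℕ) (f : ℤ → ℤ) (i j : ℤ) : ℤ → ℤ := fun m =>
  if m % (n : ℤ) = i % (n : ℤ) then f j + (m - i)
  else if m % (n : ℤ) = j % (n : ℤ) then f i + (m - j)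
  else f m

/-- `g'` is the order-preserving relabeling (by `ℤ`, `n'`-periodically) of the
restriction of `g` to the set `S` of integers. -/
def IsRelabelOn (n : ℕ) (g : ℤ → ℤ) (S : Set ℤ) (n' : ℕ) (g' : ℤ → ℤ) : Prop :=
  ∃ φ : ℤ → ℤ, StrictMono φ ∧ (∀ m : ℤ, φ (m + (n' : ℤ)) = φ m + (n : ℤ)) ∧
    Set.range φ = S ∧ ∀ m : ℤ, g (φ m) = φ (g' m)

/-- The parameters `(k₁, n₁)` of the cycle of `g` through `a`:
`n₁` is the size of the orbit of the residue of `a`, and `k₁` is the winding number of the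
permutation obtained by order-preserving relabeling of the restriction of `g`
to the integers whose residue lies in that orbit. -/
noncomputable def resParamsAt (n : ℕ) (g : ℤ → ℤ) (a : ℤ) : ℕ × ℕ :=
  (sInf {k₁ : ℕ | ∃ g₁ : ℤ → ℤ,
      IsRelabelOn n g {m : ℤ | m % (n : ℤ) ∈ orbitF n g a} (orbitF n g a).card g₁ ∧
      winding (orbitF n g a).card g₁ = k₁},
   (orbitF n g a).card)

/-- The inversion multiset `F'(f)`: one point `(k₁, n₁)` for each inversion `(i,j)`,
recording the parameters of the cycle through `i` after resolving the crossing. -/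
noncomputable def invMultiset (n : ℕ) (f : ℤ → ℤ) : Multiset (ℕ × ℕ) :=
  Multiset.map (fun p => resParamsAt n (resolve n f p.1 p.2) p.1) (inversions n f).val

/-- The inversion multiset `F(f)` in `(k, n-k)`-coordinates: points `(k₁, n₁ - k₁)`. -/
noncomputable def invMultisetF (n : ℕ) (f : ℤ → ℤ) : Multiset (ℕ × ℕ) :=
  Multiset.map (fun p => (p.1, p.2 - p.1)) (invMultiset n f)

/-- `f` is repetition-free if its inversion multiset has no repeated elements. -/
def RepFree (n : ℕ) (f : ℤ → ℤ) : Prop := (invMultiset n f).Nodup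

/-- A double crossing at `i`: with `a = f⁻¹(i+1)`, `b = f⁻¹(i)`, `c = f(i+1)`, `d = f(i)`,
we have `a < b < i < i+1 < c < d`. -/
def DoubleCrossingAt (n : ℕ) (f : ℤ → ℤ) (i : ℤ) : Prop :=
  ∃ a b : ℤ, f a = i + 1 ∧ f b = i ∧ a < b ∧ b < i ∧ i + 1 < f (i + 1) ∧ f (i + 1) < f i

/-- `i` and `j` lie in the same cycle of the reduction of `f` modulo `n`. -/
def SameCycleMod (n : ℕ) (f : ℤ → ℤ) (i j : ℤ) : Prop :=
  j % (n : ℤ) ∈ orbitF n f i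

/-- The recurrence defining the positroid Catalan numbers `C_f`. -/
structure CatalanRules (C : (n : ℕ) → (ℤ → ℤ) → ℕ) : Prop where
  base : ∀ f : ℤ → ℤ, IsBAP 1 f → C 1 f = 1
  fix_removal : ∀ (n n' : ℕ) (f f' : ℤ → ℤ), IsBAP n f → IsBAP n' f' →
    IsRelabelOn n f {m : ℤ | f m ≠ m ∧ f m ≠ m + (n : ℤ)} n' f' → C n f = C n' f'
  mul_left : ∀ (n : ℕ) (f : ℤ → ℤ) (i : ℤ), 2 ≤ n → IsBAP n f →
    (f i = i + 1 ∨ f (i + 1) = i + (n : ℤ)) → C n f = C n (mulS n i f)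
  mul_right : ∀ (n : ℕ) (f : ℤ → ℤ) (i : ℤ), 2 ≤ n → IsBAP n f →
    (f i = i + 1 ∨ f (i + 1) = i + (n : ℤ)) → C n f = C n (smulS n i f)
  conj_inv : ∀ (n : ℕ) (f : ℤ → ℤ) (i : ℤ), IsBAP n f → IsBAP n (conjS n i f) →
    alen n (conjS n i f) = alen n f → C n (conjS n i f) = C n f
  double_same : ∀ (n : ℕ) (f : ℤ → ℤ) (i : ℤ), IsBAP n f → DoubleCrossingAt n f i →
    SameCycleMod n f i (i + 1) → C n (conjS n i f) = C n (mulS n i f) + C n f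
  double_diff : ∀ (n : ℕ) (f : ℤ → ℤ) (i : ℤ), IsBAP n f → DoubleCrossingAt n f i →
    ¬ SameCycleMod n f i (i + 1) → C n (conjS n i f) = C n f

/-- The value `f^r(0)` for `r ∈ ℤ` (using `f^n(0) = kn` to extend periodically). -/
def bigPt (n k : ℕ) (f : ℤ → ℤ) (r : ℤ) : ℤ :=
  f^[(r % (n : ℤ)).toNat] 0 + (r / (n : ℤ)) * ((k : ℤ) * (n : ℤ))

/-- The big path `P_∞` of `f`: the piecewise-linear path through the points
`(r, f^r(0)/n)` for `r ∈ ℤ` (horizontal coordinate `r`, vertical `f^r(0)/n`). -/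
def bigPath (n k : ℕ) (f : ℤ → ℤ) : Set (ℝ × ℝ) :=
  ⋃ r : ℤ, segment ℝ ((r : ℝ), (bigPt n k f r : ℝ) / (n : ℝ))
    ((r : ℝ) + 1, (bigPt n k f (r + 1) : ℝ) / (n : ℝ))

/-- The small path `P^{(f)}`: the piecewise-linear path through the points
`(r, f^r(0)/n)` for `r = 0, 1, …, n`. -/
def smallPath (n : ℕ) (f : ℤ → ℤ) : Set (ℝ × ℝ) :=
  ⋃ r ∈ Finset.range n, segment ℝ ((r : ℝ), ((f^[r] 0 : ℤ) : ℝ) / (n : ℝ))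
    ((r : ℝ) + 1, ((f^[r + 1] 0 : ℤ) : ℝ) / (n : ℝ))

/-- The number of up steps among the first `t` steps of `s`. -/
def upsTo (n : ℕ) (s : Fin n → Bool) (t : ℕ) : ℕ :=
  (Finset.univ.filter (fun r : Fin n => r.val < t ∧ s r = true)).card

/-- The number of lattice paths from `(0,0)` to `(k, n-k)` with unit up and right steps
(`n` steps in total, recorded by `s : Fin n → Bool`, `true` = up) which stay above the
main diagonal of the `k × (n-k)` rectangle and avoid every point of `F`
(points recorded as `(height, horizontal position)`). -/
noncomputable def dyckCount (k n : ℕ) (F : Multiset (ℕ × ℕ)) : ℕ :=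
  Nat.card {s : Fin n → Bool //
    upsTo n s n = k ∧
    (∀ t ≤ n, k * (t - upsTo n s t) ≤ (n - k) * upsTo n s t) ∧
    (∀ t ≤ n, (upsTo n s t, t - upsTo n s t) ∉ F)}

open Function

theorem injOn_range_of_injOn_Icc {α : Type*} {F : ℕ → α} {b : ℕ} (hF : F b = F 0)
    (hinj : Set.InjOn F (Icc 1 b)) : Set.InjOn F (range b) := by
  -- On `range b`, `F` agrees with `F ∘ e` for the injection `e : 0 ↦ b, s ↦ s` into `[1, b]`.
  have he : ∀ s ∈ (range b : Set ℕ), F s = F (if s = 0 then b else s) ∧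
      (if s = 0 then b else s) ∈ (Icc 1 b : Set ℕ) := by
    intro s hs
    simp only [coe_range, Set.mem_Iio, coe_Icc, Set.mem_Icc] at hs ⊢
    split_ifs with h
    · exact ⟨h ▸ hF.symm, by omega, le_rfl⟩
    · exact ⟨rfl, by omega, hs.le⟩
  intro s hs s' hs' h
  obtain ⟨h₁, h₂⟩ := he s hs
  obtain ⟨h₁', h₂'⟩ := he s' hs'
  have := hinj h₂ h₂' (h₁.symm.trans (h.trans h₁'))
  simp only [coe_range, Set.mem_Iio] at hs hs'
  split_ifs at this <;> omega

theorem sum_range_sub_shift_of_add_period {X : ℕ → ℤ} {n : ℕ} {d : ℤ}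
    (hX : ∀ s, X (s + n) = X s + d) (b : ℕ) :
    ∑ r ∈ range n, (X (r + b) - X r) = b * d := by
  have h₁ := sum_range_add X n b
  have h₂ := sum_range_add X b n
  have h₃ : ∑ x ∈ range b, X (n + x) = ∑ x ∈ range b, X x + b * d := by
    simp [add_comm n, hX, sum_add_distrib]
  simp only [add_comm b] at h₂
  rw [sum_sub_distrib]
  linarith

theorem exists_neg_and_succ_pos {u : ℕ → ℤ} {n : ℕ} (hn : 0 < n) (hper : ∀ r, u (r + n) = u r)
    (hne : ∀ r, u r ≠ 0) (hsum : ∑ r ∈ range n, u r = 0) : ∃ r, u r < 0 ∧ 0 < u (r + 1) := by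
  obtain ⟨r₀, hr₀, h₀⟩ : ∃ r < n, u r < 0 := by
    by_contra! h
    exact hne 0 ((sum_eq_zero_iff_of_nonneg fun r hr => h r (mem_range.1 hr)).1 hsum 0
      (mem_range.2 hn))
  obtain ⟨r₁, -, h₁⟩ : ∃ r < n, 0 < u r := by
    by_contra! h
    exact hne 0 ((sum_eq_zero_iff_of_nonpos fun r hr => h r (mem_range.1 hr)).1 hsum 0
      (mem_range.2 hn))
  by_contra! hstep
  have hneg : ∀ s, r₀ ≤ s → u s < 0 := by
    intro s hs
    induction s, hs using Nat.le_induction with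
    | base => exact h₀
    | succ s _ ih => exact lt_of_le_of_ne (hstep s ih) (hne _)
  have := hneg (r₁ + n) (by omega)
  rw [hper] at this
  linarith

section PeriodicMaps

variable {h : ℤ → ℤ} {p q : ℤ}

theorem exists_eq_add_mul_of_emod_eq {m m' : ℤ} (hm : m % p = m' % p) : ∃ c, m = m' + c * p := by
  obtain ⟨c, hc⟩ := Int.ModEq.dvd hm.symm
  exact ⟨c, by linarith⟩

theorem map_add_mul_of_map_add (hper : ∀ m, h (m + p) = h m + q) (m c : ℤ) :
    h (m + c * p) = h m + c * q :=
  AddConstMapClass.map_add_zsmul (⟨h, hper⟩ : AddConstMap ℤ ℤ p q) m c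

theorem map_sub_of_map_add (hper : ∀ m, h (m + p) = h m + q) (m : ℤ) : h (m - p) = h m - q :=
  AddConstMapClass.map_sub_const (⟨h, hper⟩ : AddConstMap ℤ ℤ p q) m

theorem iterate_map_add_mul (hper : ∀ m, h (m + p) = h m + p) (s : ℕ) (m c : ℤ) :
    h^[s] (m + c * p) = h^[s] m + c * p :=
  Commute.iterate_left (g := (· + c * p)) (fun m => map_add_mul_of_map_add hper m c) s m

theorem iterate_emod_eq_of_emod_eq (hper : ∀ m, h (m + p) = h m + p) (s : ℕ) {m m' : ℤ}
    (hm : m % p = m' % p) : h^[s] m % p = h^[s] m' % p := by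
  obtain ⟨c, rfl⟩ := exists_eq_add_mul_of_emod_eq hm
  rw [iterate_map_add_mul hper, Int.add_mul_emod_self_right]

end PeriodicMaps

section Winding

variable {p : ℕ} {h : ℤ → ℤ}

theorem sum_Icc_sub_eq_winding_mul (hinj : Injective h) (hper : ∀ m, h (m + p) = h m + p)
    (hbd : IsBoundedFn p h) : ∑ m ∈ Icc (1 : ℤ) p, (h m - m) = winding p h * p := by
  classical
  -- `ρ m` is the representative of `h m` in `[1, p]`; it permutes `[1, p]`.
  set ρ : ℤ → ℤ := fun m => if h m ≤ p then h m else h m - p with hρ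
  have hmaps : Set.MapsTo ρ (Icc (1 : ℤ) p) (Icc (1 : ℤ) p) := by
    intro m hm
    have := hbd m
    simp only [coe_Icc, Set.mem_Icc, hρ] at hm ⊢
    split_ifs <;> omega
  have hinjρ : Set.InjOn ρ (Icc (1 : ℤ) p) := by
    intro m hm m' hm' he
    simp only [coe_Icc, Set.mem_Icc, hρ] at hm hm' he
    split_ifs at he
    · exact hinj he
    · have := hinj (he.trans (map_sub_of_map_add hper m').symm)
      omega
    · have := hinj ((map_sub_of_map_add hper m).trans he)
      omega
    · exact hinj (by linarith)
  have hbij := ((Icc (1 : ℤ) p).finite_toSet.injOn_iff_bijOn_of_mapsTo hmaps).mp hinjρ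
  have hsumρ : ∑ m ∈ Icc (1 : ℤ) p, ρ m = ∑ m ∈ Icc (1 : ℤ) p, m :=
    sum_nbij ρ (fun _ hm => hmaps hm) hinjρ hbij.surjOn (fun _ _ => rfl)
  have hsplit : ∀ m, h m - m = (ρ m - m) + if (p : ℤ) < h m then (p : ℤ) else 0 := by
    intro m
    simp only [hρ]
    split_ifs <;> omega
  rw [sum_congr rfl fun m _ => hsplit m, sum_add_distrib, sum_sub_distrib, hsumρ, sub_self,
    zero_add, ← sum_filter, sum_const, nsmul_eq_mul, winding]

theorem sum_Ico_zero_eq_sum_Icc_one {d : ℤ → ℤ} (hd : d 0 = d p) :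
    ∑ m ∈ Ico (0 : ℤ) p, d m = ∑ m ∈ Icc (1 : ℤ) p, d m := by
  have hIcc : Icc (1 : ℤ) p = Ioc 0 (p : ℤ) := by ext; simp only [mem_Icc, mem_Ioc]; omega
  have h0p : (0 : ℤ) ≤ p := by positivity
  have := congrArg (∑ m ∈ ·, d m) ((Ico_insert_right h0p).trans (Ioc_insert_left h0p).symm)
  simp only [sum_insert right_notMem_Ico, sum_insert left_notMem_Ioc, hd] at this
  rw [hIcc]
  linarith

theorem iterate_eq_add_winding_mul (hp : 0 < p) (hinj : Injective h)
    (hper : ∀ m, h (m + p) = h m + p) (hbd : IsBoundedFn p h) {y : ℤ}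
    (hy : Set.InjOn (fun s => h^[s] y % p) (range p)) :
    h^[p] y = y + winding p h * p := by
  classical
  have hpZ : (0 : ℤ) < p := by exact_mod_cast hp
  have hdisp : ∀ m, h m - m = h (m % p) - m % p := by
    intro m
    conv_lhs => rw [← Int.emod_add_ediv_mul m p, map_add_mul_of_map_add hper]
    ring
  have himage : (range p).image (fun s => h^[s] y % p) = Ico 0 (p : ℤ) := by
    refine eq_of_subset_of_card_le (fun z hz => ?_) ?_
    · obtain ⟨s, -, rfl⟩ := mem_image.1 hz
      exact mem_Ico.2 ⟨Int.emod_nonneg _ hpZ.ne', Int.emod_lt_of_pos _ hpZ⟩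
    · simp [card_image_of_injOn hy]
  have hd0 : h 0 - 0 = h p - p := by rw [← zero_add (p : ℤ), hper]; ring
  calc h^[p] y = y + ∑ s ∈ range p, (h (h^[s] y) - h^[s] y) := by
        simp only [← iterate_succ_apply' h, sum_range_sub (fun s => h^[s] y)]
        simp
    _ = y + ∑ m ∈ Ico (0 : ℤ) p, (h m - m) := by
        rw [← himage, sum_image hy]
        simp only [hdisp (h^[_] y)]
    _ = y + winding p h * p := by
        rw [sum_Ico_zero_eq_sum_Icc_one hd0, sum_Icc_sub_eq_winding_mul hinj hper hbd]

end Winding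

section Relabel

variable {n b : ℕ} {g g₁ : ℤ → ℤ} {S : Set ℤ}

theorem IsRelabelOn.injective (hrel : IsRelabelOn n g S b g₁) (hg : Injective g) :
    Injective g₁ := by
  obtain ⟨φ, hφ, -, -, hcomm⟩ := hrel
  intro m m' h
  exact hφ.injective (hg (by rw [hcomm, hcomm, h]))

theorem IsRelabelOn.map_add (hrel : IsRelabelOn n g S b g₁) (hg : ∀ m, g (m + n) = g m + n)
    (m : ℤ) : g₁ (m + b) = g₁ m + b := by
  obtain ⟨φ, hφ, hφper, -, hcomm⟩ := hrel
  apply hφ.injective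
  rw [← hcomm, hφper, hφper, hg, hcomm]

theorem IsRelabelOn.isBoundedFn (hrel : IsRelabelOn n g S b g₁) (hg : IsBoundedFn n g) :
    IsBoundedFn b g₁ := by
  obtain ⟨φ, hφ, hφper, -, hcomm⟩ := hrel
  exact fun m => ⟨hφ.le_iff_le.1 (by rw [← hcomm]; exact (hg _).1),
    hφ.le_iff_le.1 (by rw [← hcomm, hφper]; exact (hg _).2)⟩

theorem IsRelabelOn.winding_eq (hrel : IsRelabelOn n g S b g₁) (hb : 0 < b)
    (hginj : Injective g) (hgper : ∀ m, g (m + n) = g m + n) (hgbd : IsBoundedFn n g)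
    {y : ℤ} (hy : y ∈ S) {a : ℕ} (hdist : Set.InjOn (fun s => g^[s] y % n) (range b))
    (hcyc : g^[b] y = y + a * n) : winding b g₁ = a := by
  have hinj₁ := hrel.injective hginj
  have hper₁ := hrel.map_add hgper
  have hbd₁ := hrel.isBoundedFn hgbd
  obtain ⟨φ, hφ, hφper, hrange, hcomm⟩ := hrel
  obtain ⟨t, rfl⟩ : y ∈ Set.range φ := hrange ▸ hy
  have hit : ∀ s, g^[s] (φ t) = φ (g₁^[s] t) := fun s =>
    ((Semiconj.iterate_right (fun m => (hcomm m).symm) s) t).symm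
  have hdist₁ : Set.InjOn (fun s => g₁^[s] t % b) (range b) := by
    intro s hs s' hs' h
    obtain ⟨c, hc⟩ := exists_eq_add_mul_of_emod_eq h
    apply hdist hs hs'
    simp only [hit, hc, map_add_mul_of_map_add hφper, Int.add_mul_emod_self_right]
  have hcyc₁ : g₁^[b] t = t + a * b :=
    hφ.injective (by rw [← hit, hcyc, map_add_mul_of_map_add hφper])
  have hwind := iterate_eq_add_winding_mul hb hinj₁ hper₁ hbd₁ hdist₁
  have : (winding b g₁ : ℤ) * b = a * b := by linarith
  exact_mod_cast mul_right_cancel₀ (by positivity) this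

theorem exists_strictMono_range_eq (hb : 0 < b) {R : Finset ℤ} (hR : ∀ z ∈ R, 0 ≤ z ∧ z < n)
    (hcard : R.card = b) :
    ∃ φ : ℤ → ℤ, StrictMono φ ∧ (∀ m, φ (m + b) = φ m + n) ∧
      Set.range φ = {m : ℤ | m % n ∈ R} := by
  have hbZ : (0 : ℤ) < b := by exact_mod_cast hb
  have hmod : ∀ m : ℤ, 0 ≤ m % b ∧ m % b < b := fun m =>
    ⟨Int.emod_nonneg m hbZ.ne', Int.emod_lt_of_pos m hbZ⟩
  set e := R.orderEmbOfFin hcard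
  have he : ∀ s, 0 ≤ e s ∧ e s < n := fun s => hR _ (R.orderEmbOfFin_mem hcard s)
  -- `φ` lists `{m | m % n ∈ R}` increasingly, `b` elements per period of length `n`.
  set idx : ℤ → Fin b := fun m => ⟨(m % b).toNat, by have := hmod m; omega⟩ with hidx
  set φ : ℤ → ℤ := fun m => e (idx m) + m / b * n
  refine ⟨φ, fun m m' hmm' => ?_, fun m => ?_, ?_⟩
  · have hq : m / b ≤ m' / b := Int.ediv_le_ediv hbZ hmm'.le
    have hm := Int.emod_add_ediv_mul m b
    have hm' := Int.emod_add_ediv_mul m' b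
    have he₁ := he (idx m)
    have he₂ := he (idx m')
    rcases hq.lt_or_eq with hlt | heq
    · have : (m / b + 1) * (n : ℤ) ≤ m' / b * n := mul_le_mul_of_nonneg_right hlt (by positivity)
      simp only [φ]
      linarith
    · have hr : m % b < m' % b := by rw [heq] at hm; linarith
      have : e (idx m) < e (idx m') := e.strictMono (by
        simp only [hidx, Fin.mk_lt_mk]
        have := hmod m
        omega)
      simp only [φ, heq]
      linarith
  · have h1 : idx (m + b) = idx m := by simp [hidx]
    have h2 : (m + b) / b = m / b + 1 := by
      rw [Int.add_ediv_of_dvd_right dvd_rfl, Int.ediv_self hbZ.ne']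
    simp only [φ, h1, h2]
    ring
  · ext z
    simp only [Set.mem_range, Set.mem_ofPred_eq]
    constructor
    · rintro ⟨m, rfl⟩
      simp only [φ]
      rw [Int.add_mul_emod_self_right, Int.emod_eq_of_lt (he _).1 (he _).2]
      exact R.orderEmbOfFin_mem hcard _
    · intro hz
      obtain ⟨s, hs⟩ : z % n ∈ Set.range e := by rw [Finset.range_orderEmbOfFin]; exact hz
      have hs0 : (0 : ℤ) ≤ s := by positivity
      have hsb : (s : ℤ) < b := by exact_mod_cast s.2
      refine ⟨s + z / n * b, ?_⟩
      have h1 : idx (s + z / n * b) = s := Fin.ext (by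
        simp [hidx, Int.emod_eq_of_lt hs0 hsb])
      have h2 : ((s : ℤ) + z / n * b) / b = z / n := by
        rw [Int.add_mul_ediv_right _ _ hbZ.ne', Int.ediv_eq_zero_of_lt hs0 hsb, zero_add]
      simp only [φ, h1, h2, hs]
      exact Int.emod_add_ediv_mul z n

theorem exists_isRelabelOn (hb : 0 < b) {R : Finset ℤ} (hR : ∀ z ∈ R, 0 ≤ z ∧ z < n)
    (hcard : R.card = b) (hclosed : ∀ z : ℤ, z % n ∈ R → g z % n ∈ R) :
    ∃ g₁, IsRelabelOn n g {m : ℤ | m % n ∈ R} b g₁ := by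
  obtain ⟨φ, hφ, hφper, hrange⟩ := exists_strictMono_range_eq hb hR hcard
  have hmaps : ∀ m, g (φ m) ∈ Set.range φ := by
    have hmem : ∀ m, φ m % n ∈ R := fun m => by
      have : φ m ∈ Set.range φ := Set.mem_range_self m
      rwa [hrange] at this
    rw [hrange]
    exact fun m => hclosed _ (hmem m)
  choose g₁ hg₁ using hmaps
  exact ⟨g₁, φ, hφ, hφper, hrange, fun m => (hg₁ m).symm⟩

end Relabel

section CycleParameters

variable {n b : ℕ} {g : ℤ → ℤ}

theorem iterate_emod_eq_iterate_mod (hb : 0 < b) (hper : ∀ m, g (m + n) = g m + n) {y : ℤ}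
    (hcyc : g^[b] y % n = y % n) (s : ℕ) : g^[s] y % n = g^[s % b] y % n := by
  induction s using Nat.strong_induction_on with
  | _ s ih =>
    rcases lt_or_ge s b with hs | hs
    · rw [Nat.mod_eq_of_lt hs]
    · obtain ⟨t, rfl⟩ := Nat.exists_eq_add_of_le' hs
      rw [iterate_add_apply, iterate_emod_eq_of_emod_eq hper t hcyc, Nat.add_mod_right,
        ih t (by omega)]

theorem resParamsAt_eq_of_iterate (hb : 0 < b) (hbn : b ≤ n) (hg : IsBAP n g) {y : ℤ} {a : ℕ}
    (hdist : Set.InjOn (fun s => g^[s] y % n) (range b)) (hcyc : g^[b] y = y + a * n) :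
    resParamsAt n g y = (a, b) := by
  obtain ⟨⟨hbij, hper⟩, hbd⟩ := hg
  have hnZ : (0 : ℤ) < n := by omega
  have hmod := iterate_emod_eq_iterate_mod hb hper (by rw [hcyc, Int.add_mul_emod_self_right])
  set T := (range b).image (fun s => g^[s] y % n) with hTdef
  have horbit : orbitF n g y = T := by
    ext z
    simp only [orbitF, hTdef, mem_image, mem_range]
    constructor
    · rintro ⟨s, -, rfl⟩
      exact ⟨s % b, Nat.mod_lt s hb, (hmod s).symm⟩
    · rintro ⟨s, hs, rfl⟩
      exact ⟨s, hs.trans_le hbn, rfl⟩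
  have hcard : T.card = b := by rw [card_image_of_injOn hdist, card_range]
  have hT : ∀ z ∈ T, 0 ≤ z ∧ z < n := by
    intro z hz
    obtain ⟨s, -, rfl⟩ := mem_image.1 hz
    exact ⟨Int.emod_nonneg _ hnZ.ne', Int.emod_lt_of_pos _ hnZ⟩
  have hclosed : ∀ z : ℤ, z % n ∈ T → g z % n ∈ T := by
    intro z hz
    obtain ⟨s, -, hs⟩ := mem_image.1 hz
    refine mem_image.2 ⟨(s + 1) % b, mem_range.2 (Nat.mod_lt _ hb), ?_⟩
    rw [← hmod, iterate_succ_apply']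
    exact iterate_emod_eq_of_emod_eq hper 1 hs
  have hy : y % n ∈ T := mem_image.2 ⟨0, mem_range.2 hb, rfl⟩
  have hwind : ∀ g₁, IsRelabelOn n g {m : ℤ | m % n ∈ T} b g₁ → winding b g₁ = a :=
    fun g₁ hrel => hrel.winding_eq hb hbij.injective hper hbd hy hdist hcyc
  obtain ⟨g₁, hrel⟩ := exists_isRelabelOn hb hT hcard hclosed
  have hset : {k₁ | ∃ g₁, IsRelabelOn n g {m : ℤ | m % n ∈ T} b g₁ ∧ winding b g₁ = k₁} =
      {a} := by
    ext k₁
    simp only [Set.mem_ofPred_eq, Set.mem_singleton_iff]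
    exact ⟨fun ⟨g₁, hrel, h⟩ => h ▸ hwind g₁ hrel, fun h => ⟨g₁, hrel, h ▸ hwind g₁ hrel⟩⟩
  simp only [resParamsAt, horbit, hcard, hset, csInf_singleton]

end CycleParameters

section Resolve

variable {n : ℕ} {f : ℤ → ℤ} {i j : ℤ}

def swapResidues (n : ℕ) (i j m : ℤ) : ℤ :=
  if m % n = i % n then m + (j - i) else if m % n = j % n then m - (j - i) else m

theorem swapResidues_involutive (hij : i % n ≠ j % n) : Involutive (swapResidues n i j) := by
  intro m
  by_cases h₁ : m % n = i % n
  · have h₂ : (m + (j - i)) % n = j % n := by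
      have := Int.ModEq.add_right (j - i) h₁
      rwa [add_sub_cancel] at this
    simp [swapResidues, h₁, h₂, Ne.symm hij]
  · by_cases h₂ : m % n = j % n
    · have h₃ : (m - (j - i)) % n = i % n := by
        have := Int.ModEq.sub_right (j - i) h₂
        rwa [sub_sub_cancel] at this
      simp [swapResidues, h₂, h₃, Ne.symm hij]
    · simp [swapResidues, h₁, h₂]

theorem map_add_sub_of_emod_eq (hf : ∀ m, f (m + n) = f m + n) {m x : ℤ} (hm : m % n = x % n)
    (y : ℤ) : f (y + (m - x)) = f y + (m - x) := by
  obtain ⟨c, rfl⟩ := exists_eq_add_mul_of_emod_eq hm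
  rw [add_sub_cancel_left, map_add_mul_of_map_add hf]

theorem resolve_eq_comp (hf : ∀ m, f (m + n) = f m + n) :
    resolve n f i j = f ∘ swapResidues n i j := by
  funext m
  simp only [resolve, swapResidues, comp_apply]
  split_ifs with h₁ h₂
  · rw [show m + (j - i) = j + (m - i) by ring, map_add_sub_of_emod_eq hf h₁]
  · rw [show m - (j - i) = i + (m - j) by ring, map_add_sub_of_emod_eq hf h₂]
  · rfl

theorem resolve_apply_self : resolve n f i j i = f j := by simp [resolve]

theorem resolve_apply_of_emod_ne {m : ℤ} (hi : m % n ≠ i % n) (hj : m % n ≠ j % n) :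
    resolve n f i j m = f m := by simp [resolve, hi, hj]

theorem emod_ne_of_inversion (hf : ∀ m, f (m + n) = f m + n) (hij : i < j) (hfij : f j < f i) :
    i % n ≠ j % n := by
  intro h
  obtain ⟨c, hc⟩ := exists_eq_add_mul_of_emod_eq h.symm
  have : f j = f i + c * n := by rw [hc, map_add_mul_of_map_add hf]
  linarith

theorem IsBAP.resolve_of_inversion (hf : IsBAP n f) (hij : i < j) (hfij : f j < f i) :
    IsBAP n (resolve n f i j) := by
  obtain ⟨⟨hbij, hper⟩, hbd⟩ := hf
  have hres := emod_ne_of_inversion hper hij hfij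
  refine ⟨⟨?_, fun m => ?_⟩, fun m => ?_⟩
  · rw [resolve_eq_comp hper]
    exact hbij.comp (swapResidues_involutive hres).bijective
  · simp only [resolve, Int.add_emod_right]
    split_ifs
    · ring
    · ring
    · exact hper m
  · have := hbd i
    have := hbd j
    simp only [resolve]
    split_ifs
    · constructor <;> linarith
    · constructor <;> linarith
    · exact hbd m

theorem iterate_resolve_apply_self {b : ℕ}
    (havoid : ∀ t, 0 < t → t < b → f^[t] j % n ≠ i % n ∧ f^[t] j % n ≠ j % n) :
    ∀ s, 0 < s → s ≤ b → (resolve n f i j)^[s] i = f^[s] j := by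
  intro s hs
  induction s, hs using Nat.le_induction with
  | base => exact fun _ => resolve_apply_self
  | succ s hs ih =>
    intro hsb
    obtain ⟨hi, hj⟩ := havoid s hs (by omega)
    rw [iterate_succ_apply', ih (by omega), resolve_apply_of_emod_ne hi hj, iterate_succ_apply']

theorem mem_inversions_of_lt (hbd : IsBoundedFn n f) (hi : 1 ≤ i ∧ i ≤ n) (hij : i < j)
    (hfij : f j < f i) : (i, j) ∈ inversions n f := by
  have := hbd i
  have := hbd j
  simp only [inversions, mem_filter, mem_product, mem_Icc]
  exact ⟨⟨hi, by omega, by omega⟩, hij, hfij⟩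

end Resolve

section Theta

variable {k n : ℕ} {f : ℤ → ℤ}

theorem IsCycleMod.pos (hc : IsCycleMod n f) : 0 < n := by
  obtain ⟨r, hr, -⟩ := hc 0
  omega

theorem IsCycleMod.injOn (hc : IsCycleMod n f) : Set.InjOn (fun s => f^[s] 0 % n) (range n) := by
  classical
  refine injOn_of_card_image_eq (le_antisymm card_image_le ?_)
  have hsub : Ico (0 : ℤ) n ⊆ (range n).image (fun s => f^[s] 0 % n) := fun z hz => by
    obtain ⟨s, hs, he⟩ := hc z
    obtain ⟨hz₀, hzn⟩ := mem_Ico.1 hz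
    exact mem_image.2 ⟨s, mem_range.2 hs, by rw [he, Int.emod_eq_of_lt hz₀ hzn]⟩
  simpa using card_le_card hsub

theorem IsTheta.iterate_add_n (hf : IsTheta k n f) (s : ℕ) :
    f^[s + n] 0 = f^[s] 0 + k * n := by
  obtain ⟨⟨⟨hbij, hper⟩, hbd⟩, hc, rfl⟩ := hf
  rw [iterate_add_apply, iterate_eq_add_winding_mul hc.pos hbij.injective hper hbd hc.injOn]
  simpa using iterate_map_add_mul hper s 0 (winding n f)

theorem IsTheta.iterate_emod_injOn (hf : IsTheta k n f) (r : ℕ) :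
    Set.InjOn (fun s => f^[r + s] 0 % n) (range n) := by
  have hcyc : f^[n] 0 % n = 0 % n := by
    simpa using congrArg (· % (n : ℤ)) (hf.iterate_add_n 0)
  have hmod := iterate_emod_eq_iterate_mod hf.2.1.pos hf.1.1.2 hcyc
  intro s hs s' hs' h
  simp only [coe_range, Set.mem_Iio] at hs hs'
  have := hf.2.1.injOn (mem_range.2 (Nat.mod_lt _ hf.2.1.pos))
    (mem_range.2 (Nat.mod_lt _ hf.2.1.pos)) ((hmod _).symm.trans (h.trans (hmod _)))
  have := Nat.ModEq.add_left_cancel' r this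
  rwa [Nat.ModEq, Nat.mod_eq_of_lt hs, Nat.mod_eq_of_lt hs'] at this

theorem IsTheta.exists_crossing (hf : IsTheta k n f) {a b : ℕ} (hb : 0 < b) (hbn : b < n)
    (hslope : a * n = b * k) :
    ∃ r, f^[r + b] 0 < f^[r] 0 + a * n ∧ f^[r + 1] 0 + a * n < f^[r + 1 + b] 0 := by
  set u : ℕ → ℤ := fun r => f^[r + b] 0 - f^[r] 0 - a * n with hu
  have hn := hf.2.1.pos
  have hne : ∀ r, u r ≠ 0 := by
    intro r h
    have : f^[r + b] 0 % n = f^[r + 0] 0 % n := by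
      rw [show f^[r + b] 0 = f^[r + 0] 0 + a * n by simp only [hu] at h; simp; linarith,
        Int.add_mul_emod_self_right]
    exact hb.ne' (hf.iterate_emod_injOn r (mem_range.2 hbn) (mem_range.2 hn) this)
  have hper : ∀ r, u (r + n) = u r := by
    intro r
    simp only [hu, add_right_comm r n b, hf.iterate_add_n]
    ring
  have hsum : ∑ r ∈ range n, u r = 0 := by
    have hslope' : (a : ℤ) * n = b * k := by exact_mod_cast hslope
    rw [sum_sub_distrib, sum_range_sub_shift_of_add_period (X := fun s => f^[s] 0)
      hf.iterate_add_n, sum_const, card_range, nsmul_eq_mul]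
    linear_combination -(n : ℤ) * hslope'
  obtain ⟨r, h₁, h₂⟩ := exists_neg_and_succ_pos hn hper hne hsum
  exact ⟨r, by linarith, by linarith⟩

theorem IsTheta.resParamsAt_resolve_of_crossing (hf : IsTheta k n f) {a b r : ℕ} (hb : 0 < b)
    (hbn : b < n) {c i j : ℤ} (hi : i = f^[r + b] 0 + c * n) (hj : j = f^[r] 0 + (a + c) * n)
    (hij : i < j) (hfij : f j < f i) : resParamsAt n (resolve n f i j) i = (a, b) := by
  have hwin := hf.iterate_emod_injOn r
  have hfj : ∀ t, f^[t] j = f^[r + t] 0 + (a + c) * n := fun t => by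
    rw [hj, iterate_map_add_mul hf.1.1.2, ← iterate_add_apply, add_comm t r]
  have hres : ∀ t, f^[t] j % n = f^[r + t] 0 % n := fun t => by
    rw [hfj, Int.add_mul_emod_self_right]
  have hires : i % n = f^[r + b] 0 % n := by rw [hi, Int.add_mul_emod_self_right]
  have hjres : j % n = f^[r + 0] 0 % n := by simpa using hres 0
  -- The resolved cycle through `i` follows the orbit of `f` from `f j` until it returns to `i`.
  have hiter := iterate_resolve_apply_self (n := n) (f := f) (i := i) (j := j) (b := b)
    fun t ht htb => ⟨fun h => htb.ne (hwin (mem_range.2 (htb.trans hbn)) (mem_range.2 hbn)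
        ((hres t).symm.trans (h.trans hires))),
      fun h => ht.ne' (hwin (mem_range.2 (htb.trans hbn)) (mem_range.2 hf.2.1.pos)
        ((hres t).symm.trans (h.trans hjres)))⟩
  have hcyc : (resolve n f i j)^[b] i = i + a * n := by
    rw [hiter b hb le_rfl, hfj, hi]
    ring
  have hdist : Set.InjOn (fun s => (resolve n f i j)^[s] i % n) (range b) := by
    refine injOn_range_of_injOn_Icc (by simp [hcyc]) fun s hs s' hs' h => ?_
    simp only [coe_Icc, Set.mem_Icc] at hs hs'
    simp only [hiter s hs.1 hs.2, hiter s' hs'.1 hs'.2, hres] at h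
    exact hwin (mem_range.2 (by omega)) (mem_range.2 (by omega)) h
  exact resParamsAt_eq_of_iterate hb hbn.le (hf.1.resolve_of_inversion hij hfij) hdist hcyc

end Theta

theorem positroid_stmt9_general (k n : ℕ) (f : ℤ → ℤ) (hf : IsTheta k n f) (a b : ℕ)
    (hb : 1 ≤ b ∧ b ≤ n - 1) (hslope : a * n = b * k) :
    (a, b) ∈ invMultiset n f := by
  have hn := hf.2.1.pos
  have hper := hf.1.1.2
  obtain ⟨r, hlt, hgt⟩ := hf.exists_crossing hb.1 (by omega) hslope
  -- Translate the crossing by a multiple of `n` so that its left end lies in `[1, n]`.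
  set c : ℤ := -((f^[r + b] 0 - 1) / n) with hc
  set i := f^[r + b] 0 + c * n with hi
  set j := f^[r] 0 + (a + c) * n with hj
  have hi₁ : 1 ≤ i ∧ i ≤ n := by
    have := Int.emod_add_ediv_mul (f^[r + b] 0 - 1) n
    have := Int.emod_nonneg (f^[r + b] 0 - 1) (by omega : (n : ℤ) ≠ 0)
    have := Int.emod_lt_of_pos (f^[r + b] 0 - 1) (by omega : (0 : ℤ) < n)
    constructor <;> linarith
  have hij : i < j := by linarith
  have hfij : f j < f i := by
    rw [hi, hj, map_add_mul_of_map_add hper, map_add_mul_of_map_add hper,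
      ← iterate_succ_apply' f, ← iterate_succ_apply' f]
    rw [add_right_comm r 1 b] at hgt
    linarith
  exact Multiset.mem_map.2 ⟨(i, j), mem_inversions_of_lt hf.1.2 hi₁ hij hfij,
    hf.resParamsAt_resolve_of_crossing hb.1 (by omega) hi hj hij hfij⟩

/-- For every `f ∈ Θ_{k,n}` and every `(a,b) ∈ [k-1]×[n-1]` with `a/b = k/n`,
the point `(a,b)` belongs to the inversion multiset `F'(f)`. -/
theorem positroid_stmt9 (k n : ℕ) (f : ℤ → ℤ) (hf : IsTheta k n f) (a b : ℕ)
    (ha : 1 ≤ a ∧ a ≤ k - 1) (hb : 1 ≤ b ∧ b ≤ n - 1) (hslope : a * n = b * k) :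
    (a, b) ∈ invMultiset n f :=
  positroid_stmt9_general k n f hf a b hb hslope
end

section
/- Let f ∈ Θ_{k,n} and let P_∞ be its big path, the piecewise-linear path through the points p_r = (r, f^r(0)/n) for r ∈ ℤ (with r the horizontal coordinate and f^r(0)/n the vertical coordinate). Then for α = (b, a) ∈ ℤ² (horizontal shift b, vertical shift a) with α not a multiple of (n, k): the multiplicity of (a,b) in the inversion multiset F'(f) (after normalizing α modulo ℤ·(n,k) to lie in [k-1]×[n-1]) equals half the number of intersection points of P_∞ with P_∞ + α, counted modulo the translation (n,k). -/
open Finset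

/-!
Between consecutive integer abscissae both `P_∞` and `P_∞ + α` are affine, so their intersection
points with abscissa in `[0, n)` correspond to the sign changes on `[0, n)` of
`E(p) = f^p(0) - f^(p-b)(0) - a n`. Since `α ∉ ℤ (n, k)`, `E` never vanishes, and it is
`n`-periodic, so its sign changes are equally many rises and falls.

A rise at `p` gives the inversion `(i, i - E(p))`, where `i ∈ [1, n]` and `i ≡ f^p(0) mod n`.
After resolving it, the cycle through `i` follows `P_∞` from abscissa `p - b + 1` and returns to
`i + (a - ⌊b/n⌋ k) n` after `b mod n` steps. The winding number of a bounded affine permutation is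
its average displacement `(1/n) ∑_{m=1}^{n} (f(m) - m)`, so after relabelling this cycle has
parameters `(a - ⌊b/n⌋ k, b mod n)`. Conversely, every inversion with these parameters comes from a
unique rise.
-/

open Function

section QuasiPeriodic

theorem map_add_mul_of_map_add_s10 {φ : ℤ → ℤ} {A B : ℤ} (h : ∀ m, φ (m + A) = φ m + B) (t m : ℤ) :
    φ (m + t * A) = φ m + t * B := by
  have hper : Periodic (fun t : ℤ => φ (m + t * A) - t * B) 1 := fun t => by
    simp only [add_mul, one_mul, ← add_assoc, h]
    ring
  linarith [show φ (m + t * A) - t * B = φ m by simpa using hper.int_mul_eq t]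

variable {n : ℤ} {f : ℤ → ℤ}

theorem iterate_add_mul_of_map_add (h : ∀ m, f (m + n) = f m + n) (r : ℕ) (t m : ℤ) :
    f^[r] (m + t * n) = f^[r] m + t * n := by
  induction r generalizing m with
  | zero => rfl
  | succ r ih => rw [iterate_succ_apply, iterate_succ_apply, map_add_mul_of_map_add_s10 h, ih]

theorem Int.ModEq.map_of_map_add {φ : ℤ → ℤ} {A B : ℤ} (h : ∀ m, φ (m + A) = φ m + B) {m m' : ℤ}
    (hm : m ≡ m' [ZMOD A]) : φ m ≡ φ m' [ZMOD B] := by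
  obtain ⟨t, ht⟩ := hm.dvd
  rw [show m' = m + t * A by linarith, map_add_mul_of_map_add_s10 h]
  exact (Int.add_mul_emod_self_right _ _ _).symm

theorem Int.ModEq.of_map_of_map_add (hinj : Injective f) (h : ∀ m, f (m + n) = f m + n)
    {m m' : ℤ} (hm : f m ≡ f m' [ZMOD n]) : m ≡ m' [ZMOD n] := by
  obtain ⟨t, ht⟩ := hm.dvd
  have : f m' = f (m + t * n) := by rw [map_add_mul_of_map_add_s10 h]; linarith
  rw [hinj this]
  exact (Int.add_mul_emod_self_right _ _ _).symm

theorem Int.ModEq.eq_of_mem_Ico {c m m' : ℤ} (hm : m ≡ m' [ZMOD n])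
    (h : m ∈ Set.Ico c (c + n)) (h' : m' ∈ Set.Ico c (c + n)) : m = m' := by
  have := Int.eq_zero_of_abs_lt_dvd hm.dvd
    (abs_sub_lt_iff.2 ⟨by linarith [h.1, h'.2], by linarith [h.2, h'.1]⟩)
  linarith

theorem Int.eq_emod_sub_of_add_modEq {n q p s : ℤ} (hs : s ∈ Set.Ico 0 n)
    (h : q + s ≡ p [ZMOD n]) : s = (p - q) % n := by
  have hn : 0 < n := hs.1.trans_lt hs.2
  refine Int.ModEq.eq_of_mem_Ico (c := 0) ?_ (by simpa using hs)
    ⟨Int.emod_nonneg _ hn.ne', by simpa using Int.emod_lt_of_pos _ hn⟩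
  simpa using (h.sub_right q).trans (Int.mod_modEq _ _).symm

end QuasiPeriodic

section ModIcc

def modIcc (n : ℕ) (m : ℤ) : ℤ := (m - 1) % n + 1

variable {n : ℕ}

theorem modIcc_modEq (m : ℤ) : modIcc n m ≡ m [ZMOD n] := by
  simpa [modIcc] using (Int.mod_modEq (m - 1) n).add_right 1

theorem modIcc_mem (hn : 0 < n) (m : ℤ) : modIcc n m ∈ Set.Icc 1 (n : ℤ) := by
  have := Int.emod_nonneg (m - 1) (by omega : (n : ℤ) ≠ 0)
  have := Int.emod_lt_of_pos (m - 1) (by omega : (0 : ℤ) < n)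
  exact ⟨by simp only [modIcc]; omega, by simp only [modIcc]; omega⟩

theorem modIcc_eq_of_modEq (hn : 0 < n) {i m : ℤ} (hi : i ∈ Set.Icc 1 (n : ℤ))
    (h : i ≡ m [ZMOD n]) : modIcc n m = i := by
  have := modIcc_mem hn m
  exact ((modIcc_modEq m).trans h.symm).eq_of_mem_Ico (c := 1) ⟨this.1, by linarith [this.2]⟩
    ⟨hi.1, by linarith [hi.2]⟩

theorem modIcc_congr {m m' : ℤ} (h : m ≡ m' [ZMOD n]) : modIcc n m = modIcc n m' := by
  rw [modIcc, modIcc, show (m - 1) % n = (m' - 1) % n from h.sub_right 1]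

end ModIcc

section Displacement

variable {n : ℕ} {f : ℤ → ℤ}

theorem sum_comp_eq_sum_Icc_of_injOn_emod {ι M : Type*} [AddCommMonoid M] {d : ℤ → M}
    (hd : Periodic d n) {s : Finset ι} {e : ι → ℤ} (he : Set.InjOn (fun i => e i % n) s)
    (hs : s.card = n) :
    ∑ i ∈ s, d (e i) = ∑ m ∈ Icc (1 : ℤ) n, d m := by
  rcases Nat.eq_zero_or_pos n with rfl | hn
  · simp [Finset.card_eq_zero.1 hs]
  have hmaps : Set.MapsTo (fun i => modIcc n (e i)) s (Icc (1 : ℤ) n) := fun i _ => by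
    simpa using modIcc_mem hn (e i)
  have hinj : Set.InjOn (fun i => modIcc n (e i)) s := fun i hi i' hi' h =>
    he hi hi' (((modIcc_modEq (e i)).symm.trans (congrArg (· % (n : ℤ)) h)).trans
      (modIcc_modEq (e i')))
  refine sum_nbij _ hmaps hinj (surjOn_of_injOn_of_card_le _ hmaps hinj (by simp [hs])) ?_
  intro i _
  obtain ⟨t, ht⟩ := (modIcc_modEq (n := n) (e i)).dvd
  conv_lhs => rw [show e i = modIcc n (e i) + t * n by linarith [mul_comm (n : ℤ) t]]
  simpa using hd.int_mul t (modIcc n (e i))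

theorem iterate_sub_eq_sum_Icc (h : ∀ m, f (m + n) = f m + n) {x : ℤ}
    (hres : Set.InjOn (fun r => f^[r] x % n) (range n)) :
    f^[n] x - x = ∑ m ∈ Icc (1 : ℤ) n, (f m - m) := by
  have hd : Periodic (fun m => f m - m) n := fun m => by simp only [h]; ring
  rw [← sum_comp_eq_sum_Icc_of_injOn_emod hd hres (card_range n)]
  simpa [iterate_succ_apply'] using (sum_range_sub (fun r => f^[r] x) n).symm

theorem sum_Icc_sub_eq_mul_winding (hinj : Injective f) (h : ∀ m, f (m + n) = f m + n)
    (hbdd : IsBoundedFn n f) :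
    ∑ m ∈ Icc (1 : ℤ) n, (f m - m) = n * winding n f := by
  rcases Nat.eq_zero_or_pos n with rfl | hn
  · simp [winding]
  have hmem : ∀ {m}, m ∈ Icc (1 : ℤ) n → m ∈ Set.Icc (1 : ℤ) n := fun hm => by simpa using hm
  have hres : Set.InjOn (fun m => f m % n) (Icc (1 : ℤ) n) := fun m hm m' hm' hmm' =>
    Int.ModEq.eq_of_mem_Ico (c := 1) (Int.ModEq.of_map_of_map_add hinj h hmm')
      ⟨(hmem hm).1, by linarith [(hmem hm).2]⟩ ⟨(hmem hm').1, by linarith [(hmem hm').2]⟩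
  have hperm : ∑ m ∈ Icc (1 : ℤ) n, modIcc n (f m) = ∑ m ∈ Icc (1 : ℤ) n, m := by
    rw [sum_comp_eq_sum_Icc_of_injOn_emod (fun m => modIcc_congr (by simp [Int.ModEq])) hres
      (by simp)]
    exact sum_congr rfl fun m hm => modIcc_eq_of_modEq hn (hmem hm) rfl
  have hexcess : ∀ m ∈ Icc (1 : ℤ) n,
      f m - modIcc n (f m) = if (n : ℤ) < f m then (n : ℤ) else 0 := fun m hm => by
    obtain ⟨hm₁, hm₂⟩ := hmem hm
    have := hbdd m
    split_ifs with hlt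
    · rw [modIcc_eq_of_modEq hn (i := f m - n) ⟨by omega, by omega⟩ (by simp [Int.ModEq])]
      ring
    · rw [modIcc_eq_of_modEq hn ⟨by omega, by omega⟩ rfl, sub_self]
  calc ∑ m ∈ Icc (1 : ℤ) n, (f m - m)
      = ∑ m ∈ Icc (1 : ℤ) n, (f m - modIcc n (f m)) +
          (∑ m ∈ Icc (1 : ℤ) n, modIcc n (f m) - ∑ m ∈ Icc (1 : ℤ) n, m) := by
        rw [← sum_sub_distrib, ← sum_add_distrib]
        exact sum_congr rfl fun m _ => by ring
    _ = n * winding n f := by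
        rw [hperm, sub_self, add_zero, sum_congr rfl hexcess, sum_ite, sum_const_zero, add_zero,
          sum_const, winding, nsmul_eq_mul, mul_comm]

theorem iterate_eq_add_mul_winding (hinj : Injective f) (h : ∀ m, f (m + n) = f m + n)
    (hbdd : IsBoundedFn n f) {x : ℤ} (hres : Set.InjOn (fun r => f^[r] x % n) (range n)) :
    f^[n] x = x + n * winding n f := by
  linarith [iterate_sub_eq_sum_Icc h hres, sum_Icc_sub_eq_mul_winding hinj h hbdd]

end Displacement

namespace IsTheta

variable {k n : ℕ} {f : ℤ → ℤ}

theorem pos (hf : IsTheta k n f) : 0 < n := by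
  obtain ⟨r, hr, -⟩ := hf.2.1 0
  omega

theorem map_add (hf : IsTheta k n f) (m : ℤ) : f (m + n) = f m + n := hf.1.1.2 m

theorem injective (hf : IsTheta k n f) : Injective f := hf.1.1.1.1

theorem bounded (hf : IsTheta k n f) : IsBoundedFn n f := hf.1.2

theorem injOn_iterate_emod (hf : IsTheta k n f) :
    Set.InjOn (fun r => f^[r] 0 % n) (range n) := by
  have hn : (0 : ℤ) < n := by exact_mod_cast hf.pos
  have himage : (range n).image (fun r => f^[r] 0 % n) = Ico 0 (n : ℤ) := by
    refine Subset.antisymm (fun m hm => ?_) (fun m hm => ?_)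
    · obtain ⟨r, -, rfl⟩ := mem_image.1 hm
      exact mem_Ico.2 ⟨Int.emod_nonneg _ hn.ne', Int.emod_lt_of_pos _ hn⟩
    · obtain ⟨r, hr, hrm⟩ := hf.2.1 m
      rw [Int.emod_eq_of_lt (mem_Ico.1 hm).1 (mem_Ico.1 hm).2] at hrm
      exact mem_image.2 ⟨r, mem_range.2 hr, hrm⟩
  exact injOn_of_card_image_eq (by simp [himage])

theorem iterate_n_apply_zero (hf : IsTheta k n f) : f^[n] 0 = k * n := by
  rw [iterate_eq_add_mul_winding hf.injective hf.map_add hf.bounded hf.injOn_iterate_emod, hf.2.2]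
  ring

end IsTheta

section BigPt

variable {k n : ℕ} {f : ℤ → ℤ}

theorem bigPt_add_mul (r t : ℤ) : bigPt n k f (r + t * n) = bigPt n k f r + t * (k * n) := by
  rcases eq_or_ne n 0 with rfl | hn
  · simp
  simp only [bigPt, Int.add_mul_emod_self_right,
    Int.add_mul_ediv_right _ _ (Int.natCast_ne_zero.2 hn)]
  ring

theorem bigPt_natCast_of_le (hf : IsTheta k n f) {r : ℕ} (hr : r ≤ n) :
    bigPt n k f r = f^[r] 0 := by
  rcases hr.lt_or_eq with hr | rfl
  · have hr' : (r : ℤ) < n := by exact_mod_cast hr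
    simp [bigPt, Int.emod_eq_of_lt (Int.natCast_nonneg r) hr',
      Int.ediv_eq_zero_of_lt (Int.natCast_nonneg r) hr']
  · have hn : (r : ℤ) ≠ 0 := by exact_mod_cast hf.pos.ne'
    simp [bigPt, hf.iterate_n_apply_zero, Int.ediv_self hn]

theorem bigPt_succ (hf : IsTheta k n f) (r : ℤ) : bigPt n k f (r + 1) = f (bigPt n k f r) := by
  have hn : (0 : ℤ) < n := by exact_mod_cast hf.pos
  obtain ⟨s, hs⟩ : ∃ s : ℕ, (s : ℤ) = r % n := ⟨(r % n).toNat, Int.toNat_of_nonneg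
    (Int.emod_nonneg _ hn.ne')⟩
  have hsn : s < n := by have := Int.emod_lt_of_pos r hn; omega
  have hr : r = s + r / n * n := by linarith [Int.emod_add_mul_ediv r n, mul_comm (n : ℤ) (r / n)]
  rw [hr, show (s : ℤ) + r / n * n + 1 = ((s + 1 : ℕ) : ℤ) + r / n * n by push_cast; ring,
    bigPt_add_mul, bigPt_add_mul, bigPt_natCast_of_le hf hsn, bigPt_natCast_of_le hf hsn.le,
    show r / n * (k * n) = (r / n * k) * n by ring, map_add_mul_of_map_add_s10 hf.map_add,
    iterate_succ_apply']

theorem bigPt_modEq_bigPt_emod (r : ℤ) : bigPt n k f r ≡ bigPt n k f (r % n) [ZMOD n] := by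
  conv_lhs => rw [← Int.emod_add_mul_ediv r n, mul_comm, bigPt_add_mul,
    show r / n * (k * n) = (r / n * k) * n by ring]
  exact Int.add_mul_emod_self_right _ _ _

theorem bigPt_modEq_iff (hf : IsTheta k n f) {r s : ℤ} :
    bigPt n k f r ≡ bigPt n k f s [ZMOD n] ↔ r ≡ s [ZMOD n] := by
  refine ⟨fun h => ?_, fun h => ?_⟩
  · have hn : (0 : ℤ) < n := by exact_mod_cast hf.pos
    have hreduce : ∀ r : ℤ, ((r % n).toNat : ℤ) = r % n ∧ (r % n).toNat < n := fun r =>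
      ⟨Int.toNat_of_nonneg (Int.emod_nonneg _ hn.ne'), by have := Int.emod_lt_of_pos r hn; omega⟩
    have h' := (bigPt_modEq_bigPt_emod r).symm.trans (h.trans (bigPt_modEq_bigPt_emod s))
    rw [← (hreduce r).1, ← (hreduce s).1, bigPt_natCast_of_le hf (hreduce r).2.le,
      bigPt_natCast_of_le hf (hreduce s).2.le] at h'
    have := hf.injOn_iterate_emod (mem_range.2 (hreduce r).2) (mem_range.2 (hreduce s).2) h'
    unfold Int.ModEq
    rw [← (hreduce r).1, ← (hreduce s).1, this]
  · exact (bigPt_modEq_bigPt_emod r).trans (h ▸ (bigPt_modEq_bigPt_emod s).symm)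

theorem exists_eq_bigPt_add (hf : IsTheta k n f) (m : ℤ) :
    ∃ p u : ℤ, p ∈ Set.Ico 0 (n : ℤ) ∧ m = bigPt n k f p + u * n := by
  obtain ⟨r, hr, hrm⟩ := hf.2.1 m
  obtain ⟨u, hu⟩ := (show bigPt n k f r ≡ m [ZMOD n] by
    rw [bigPt_natCast_of_le hf hr.le]; exact hrm).dvd
  exact ⟨r, u, ⟨by positivity, by exact_mod_cast hr⟩, by linarith [mul_comm (n : ℤ) u]⟩

end BigPt

section SignChanges

variable {α : Type*} [Ring α] [LinearOrder α] [IsStrictOrderedRing α]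

theorem sum_Ico_zero_natCast_sub {M : Type*} [AddCommGroup M] (g : ℤ → M) (N : ℕ) :
    ∑ p ∈ Ico (0 : ℤ) N, (g (p + 1) - g p) = g N - g 0 := by
  induction N with
  | zero => simp
  | succ N ih =>
    rw [Nat.cast_succ, Ico_add_one_right_eq_Icc, ← Ico_insert_right (by positivity),
      sum_insert (by simp), ih]
    abel

theorem card_filter_rise_eq_card_filter_fall (s : ℤ → Prop) [DecidablePred s] {N : ℕ}
    (hs : s N ↔ s 0) :
    #{p ∈ Ico (0 : ℤ) N | ¬ s p ∧ s (p + 1)} = #{p ∈ Ico (0 : ℤ) N | s p ∧ ¬ s (p + 1)} := by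
  set χ : ℤ → ℤ := fun p => if s p then 1 else 0
  have hstep : ∀ p, χ (p + 1) - χ p =
      (if ¬ s p ∧ s (p + 1) then 1 else 0) - (if s p ∧ ¬ s (p + 1) then 1 else 0) := fun p => by
    by_cases h : s p <;> by_cases h' : s (p + 1) <;> simp [χ, h, h']
  have htel := sum_Ico_zero_natCast_sub χ N
  simp only [hstep, sum_sub_distrib, sum_boole, χ, if_congr hs rfl rfl, sub_self] at htel
  exact_mod_cast sub_eq_zero.1 htel

theorem card_filter_mul_neg_eq_two_mul {D : ℤ → α} (hD : ∀ p, D p ≠ 0) {N : ℕ} (hN : D N = D 0) :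
    #{p ∈ Ico (0 : ℤ) N | D p * D (p + 1) < 0} =
      2 * #{p ∈ Ico (0 : ℤ) N | D p < 0 ∧ 0 < D (p + 1)} := by
  have hneg : ∀ p, D p < 0 ↔ ¬ 0 < D p := fun p => by
    rw [not_lt]; exact ⟨le_of_lt, fun h => h.lt_of_ne (hD p)⟩
  have hsplit : ∀ p, D p * D (p + 1) < 0 ↔
      (¬ 0 < D p ∧ 0 < D (p + 1)) ∨ (0 < D p ∧ ¬ 0 < D (p + 1)) := fun p => by
    rw [mul_neg_iff, hneg, hneg]; tauto
  simp only [hsplit, hneg]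
  rw [filter_or, card_union_of_disjoint (disjoint_filter.2 fun p _ h h' => h.1 h'.1),
    ← card_filter_rise_eq_card_filter_fall (fun p => 0 < D p) (by rw [hN]), two_mul]

end SignChanges

section PiecewiseLinear

noncomputable def pwLinear (y : ℤ → ℝ) (x : ℝ) : ℝ :=
  y ⌊x⌋ + Int.fract x * (y (⌊x⌋ + 1) - y ⌊x⌋)

theorem pwLinear_intCast_add (y : ℤ → ℝ) (r : ℤ) {θ : ℝ} (hθ : θ ∈ Set.Icc 0 1) :
    pwLinear y (r + θ) = y r + θ * (y (r + 1) - y r) := by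
  rcases hθ.2.lt_or_eq with hθ1 | rfl
  · have hfl : ⌊θ⌋ = 0 := Int.floor_eq_zero_iff.2 ⟨hθ.1, hθ1⟩
    have hfr : Int.fract θ = θ := Int.fract_eq_self.2 ⟨hθ.1, hθ1⟩
    simp [pwLinear, Int.floor_intCast_add, Int.fract_intCast_add, hfl, hfr]
  · rw [pwLinear, show (r : ℝ) + 1 = ((r + 1 : ℤ) : ℝ) by push_cast; ring, Int.floor_intCast,
      Int.fract_intCast]
    ring

theorem mem_iUnion_segment_iff (y : ℤ → ℝ) (q : ℝ × ℝ) :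
    q ∈ ⋃ r : ℤ, segment ℝ ((r : ℝ), y r) ((r : ℝ) + 1, y (r + 1)) ↔ q.2 = pwLinear y q.1 := by
  simp only [Set.mem_iUnion, segment_eq_image', Set.mem_image]
  constructor
  · rintro ⟨r, θ, hθ, rfl⟩
    simp [pwLinear_intCast_add y r hθ]
  · intro hq
    refine ⟨⌊q.1⌋, Int.fract q.1, ⟨Int.fract_nonneg _, (Int.fract_lt_one _).le⟩, ?_⟩
    ext
    · simp [Int.floor_add_fract]
    · simp [hq, pwLinear]

theorem pwLinear_sub_shift (y : ℤ → ℝ) (b : ℤ) (c x : ℝ) :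
    pwLinear y x - (pwLinear y (x - b) + c) = pwLinear (fun r => y r - y (r - b) - c) x := by
  simp only [pwLinear, Int.floor_sub_intCast, Int.fract_sub_intCast, sub_add_eq_add_sub]
  ring

theorem pwLinear_div (y : ℤ → ℝ) (c x : ℝ) :
    pwLinear (fun r => y r / c) x = pwLinear y x / c := by
  simp only [pwLinear]
  ring

theorem add_mul_sub_eq_zero_iff {d₀ d₁ θ : ℝ} (h₀ : d₀ ≠ 0) (hθ : θ ∈ Set.Ico 0 1) :
    d₀ + θ * (d₁ - d₀) = 0 ↔ d₀ * d₁ < 0 ∧ θ = d₀ / (d₀ - d₁) := by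
  constructor
  · intro h
    have hθ0 : 0 < θ := hθ.1.lt_of_ne fun h' => h₀ (by simpa [← h'] using h)
    have hd : d₀ - d₁ ≠ 0 := fun h' => h₀ (by linear_combination h + θ * h')
    refine ⟨?_, by field_simp; linear_combination -h⟩
    have hprod : d₀ * d₁ * θ = -(d₀ ^ 2 * (1 - θ)) := by linear_combination d₀ * h
    have hpos : 0 < d₀ ^ 2 * (1 - θ) := mul_pos (by positivity) (by linarith [hθ.2])
    by_contra hc
    nlinarith [mul_nonneg (not_lt.1 hc) hθ0.le]
  · rintro ⟨hneg, rfl⟩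
    have hd : d₀ - d₁ ≠ 0 := fun h' => by
      rw [sub_eq_zero] at h'
      subst h'
      nlinarith [mul_self_nonneg d₀]
    field_simp
    ring

theorem div_sub_mem_Ioo_of_mul_neg {d₀ d₁ : ℝ} (h : d₀ * d₁ < 0) :
    d₀ / (d₀ - d₁) ∈ Set.Ioo 0 1 := by
  rcases mul_neg_iff.1 h with ⟨h₀, h₁⟩ | ⟨h₀, h₁⟩
  · exact ⟨div_pos h₀ (by linarith), (div_lt_one (by linarith)).2 (by linarith)⟩
  · exact ⟨div_pos_of_neg_of_neg h₀ (by linarith),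
      (div_lt_one_of_neg (by linarith)).2 (by linarith)⟩

theorem card_zeros_pwLinear {D : ℤ → ℝ} (hD : ∀ p, D p ≠ 0) (N : ℕ) :
    Nat.card {x : ℝ // x ∈ Set.Ico 0 (N : ℝ) ∧ pwLinear D x = 0} =
      #{p ∈ Ico (0 : ℤ) N | D p * D (p + 1) < 0} := by
  have hzero : ∀ x, pwLinear D x = 0 ↔ D ⌊x⌋ * D (⌊x⌋ + 1) < 0 ∧
      Int.fract x = D ⌊x⌋ / (D ⌊x⌋ - D (⌊x⌋ + 1)) :=
    fun x => add_mul_sub_eq_zero_iff (hD _) ⟨Int.fract_nonneg x, Int.fract_lt_one x⟩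
  rw [← Nat.card_eq_finsetCard]
  refine Nat.card_eq_of_bijective (fun x => ⟨⌊x.1⌋, ?_⟩) ⟨fun ⦃x x'⦄ hxx' => ?_, fun p => ?_⟩
  · obtain ⟨x, ⟨hx0, hxN⟩, hx⟩ := x
    exact mem_filter.2 ⟨mem_Ico.2 ⟨Int.floor_nonneg.2 hx0, Int.floor_lt.2 (by exact_mod_cast hxN)⟩,
      ((hzero x).1 hx).1⟩
  · have hfl : ⌊x.1⌋ = ⌊x'.1⌋ := congrArg Subtype.val hxx'
    have hfr : Int.fract x.1 = Int.fract x'.1 := by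
      rw [((hzero _).1 x.2.2).2, ((hzero _).1 x'.2.2).2, hfl]
    have hflR : (⌊x.1⌋ : ℝ) = ⌊x'.1⌋ := by rw [hfl]
    exact Subtype.ext (by linarith [Int.floor_add_fract x.1, Int.floor_add_fract x'.1])
  · obtain ⟨p, hp⟩ := p
    obtain ⟨⟨hp0, hpN⟩, hsign⟩ := mem_filter.1 hp |>.imp_left mem_Ico.1
    have hθ := div_sub_mem_Ioo_of_mul_neg hsign
    have hfl : ⌊(p : ℝ) + D p / (D p - D (p + 1))⌋ = p := by
      rw [Int.floor_intCast_add, Int.floor_eq_zero_iff.2 ⟨hθ.1.le, hθ.2⟩, add_zero]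
    have hfr : Int.fract ((p : ℝ) + D p / (D p - D (p + 1))) = D p / (D p - D (p + 1)) := by
      rw [Int.fract_intCast_add, Int.fract_eq_self.2 ⟨hθ.1.le, hθ.2⟩]
    refine ⟨⟨(p : ℝ) + D p / (D p - D (p + 1)), ⟨?_, ?_⟩, (hzero _).2 ⟨?_, ?_⟩⟩, Subtype.ext hfl⟩
    · have : (0 : ℝ) ≤ p := by exact_mod_cast hp0
      linarith [hθ.1]
    · have : (p : ℝ) + 1 ≤ N := by exact_mod_cast hpN
      linarith [hθ.2]
    · rwa [hfl]
    · rw [hfl, hfr]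

end PiecewiseLinear

section PathGap

variable {k n : ℕ} {f : ℤ → ℤ}

/-- `n` times the height of `P_∞` above `P_∞ + (b, a)` at the abscissa `p`. -/
def pathGap (n k : ℕ) (f : ℤ → ℤ) (a b p : ℤ) : ℤ :=
  bigPt n k f p - bigPt n k f (p - b) - a * n

theorem pathGap_add_n (a b p : ℤ) : pathGap n k f a b (p + n) = pathGap n k f a b p := by
  have h₁ := bigPt_add_mul (n := n) (k := k) (f := f) p 1
  have h₂ := bigPt_add_mul (n := n) (k := k) (f := f) (p - b) 1
  rw [one_mul] at h₁ h₂
  rw [pathGap, pathGap, h₁, show p + n - b = p - b + n by ring, h₂]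
  ring

theorem pathGap_ne_zero (hf : IsTheta k n f) {a b : ℤ}
    (hα : ¬ ∃ t : ℤ, a = t * (k : ℤ) ∧ b = t * (n : ℤ)) (p : ℤ) : pathGap n k f a b p ≠ 0 := by
  intro h
  have hmod : bigPt n k f p ≡ bigPt n k f (p - b) [ZMOD n] := by
    rw [pathGap] at h
    rw [show bigPt n k f p = bigPt n k f (p - b) + a * n by linarith]
    exact Int.add_mul_emod_self_right _ _ _
  obtain ⟨t, ht⟩ := ((bigPt_modEq_iff hf).1 hmod).dvd
  have hb : b = -t * n := by linarith [mul_comm (n : ℤ) t]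
  have hgap : pathGap n k f a b p = (-t * k - a) * n := by
    rw [pathGap, show p - b = p + t * n by rw [hb]; ring, bigPt_add_mul]
    ring
  have hn : (n : ℤ) ≠ 0 := by exact_mod_cast hf.pos.ne'
  exact hα ⟨-t, by linarith [(mul_eq_zero.1 (hgap ▸ h)).resolve_right hn], hb⟩

end PathGap

section Intersections

theorem natCard_subtype_graph {α β : Type*} (g : α → β) (P : α → Prop) :
    Nat.card {q : α × β // q.2 = g q.1 ∧ P q.1} = Nat.card {x // P x} :=
  Nat.card_congr
    { toFun := fun q => ⟨q.1.1, q.2.2⟩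
      invFun := fun x => ⟨(x.1, g x.1), rfl, x.2⟩
      left_inv := fun q => Subtype.ext (Prod.ext rfl q.2.1.symm)
      right_inv := fun _ => rfl }

theorem mem_image_translate_iff {S : Set (ℝ × ℝ)} {a b : ℝ} {q : ℝ × ℝ} :
    q ∈ (fun q : ℝ × ℝ => (q.1 + b, q.2 + a)) '' S ↔ (q.1 - b, q.2 - a) ∈ S := by
  constructor
  · rintro ⟨q', hq', rfl⟩
    simpa using hq'
  · exact fun h => ⟨_, h, by simp⟩

variable {k n : ℕ} {f : ℤ → ℤ}

theorem pwLinear_bigPt_sub_shift (hn : n ≠ 0) (a b : ℤ) (x : ℝ) :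
    pwLinear (fun r => (bigPt n k f r : ℝ) / n) x -
        (pwLinear (fun r => (bigPt n k f r : ℝ) / n) (x - b) + a) =
      pwLinear (fun r => (pathGap n k f a b r : ℝ)) x / n := by
  rw [pwLinear_sub_shift, ← pwLinear_div]
  congr 1
  funext r
  simp only [pathGap, Int.cast_sub, Int.cast_mul, Int.cast_natCast]
  field_simp

theorem card_bigPath_inter (hf : IsTheta k n f) {a b : ℤ}
    (hα : ¬ ∃ t : ℤ, a = t * (k : ℤ) ∧ b = t * (n : ℤ)) :
    Nat.card {q : ℝ × ℝ // q ∈ bigPath n k f ∧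
        q ∈ (fun q : ℝ × ℝ => (q.1 + (b : ℝ), q.2 + (a : ℝ))) '' bigPath n k f ∧
        q.1 ∈ Set.Ico (0 : ℝ) (n : ℝ)} =
      #{p ∈ Ico (0 : ℤ) n | pathGap n k f a b p * pathGap n k f a b (p + 1) < 0} := by
  set y : ℤ → ℝ := fun r => (bigPt n k f r : ℝ) / n
  set E : ℤ → ℝ := fun r => (pathGap n k f a b r : ℝ)
  have hn : (n : ℝ) ≠ 0 := by exact_mod_cast hf.pos.ne'
  have hmem : ∀ q : ℝ × ℝ, (q ∈ bigPath n k f ∧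
      q ∈ (fun q : ℝ × ℝ => (q.1 + (b : ℝ), q.2 + (a : ℝ))) '' bigPath n k f ∧
      q.1 ∈ Set.Ico (0 : ℝ) (n : ℝ)) ↔ q.2 = pwLinear y q.1 ∧ (q.1 ∈ Set.Ico (0 : ℝ) n ∧
        pwLinear E q.1 = 0) := fun q => by
    have hgap : pwLinear y q.1 - (pwLinear y (q.1 - b) + a) = pwLinear E q.1 / n :=
      pwLinear_bigPt_sub_shift hf.pos.ne' a b q.1
    have hshift : q.2 = pwLinear y q.1 →
        (q.2 - a = pwLinear y (q.1 - b) ↔ pwLinear E q.1 = 0) := fun h => by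
      rw [show pwLinear E q.1 = 0 ↔ pwLinear E q.1 / n = 0 by rw [div_eq_zero_iff, or_iff_left hn],
        ← hgap, h]
      constructor <;> intro <;> linarith
    rw [mem_image_translate_iff, bigPath, mem_iUnion_segment_iff, mem_iUnion_segment_iff]
    exact ⟨fun ⟨h₁, h₂, h₃⟩ => ⟨h₁, h₃, (hshift h₁).1 h₂⟩,
      fun ⟨h₁, h₃, h₄⟩ => ⟨h₁, (hshift h₁).2 h₄, h₃⟩⟩
  rw [Nat.card_congr (Equiv.subtypeEquivRight hmem),
    natCard_subtype_graph (pwLinear y) (fun x => x ∈ Set.Ico (0 : ℝ) n ∧ pwLinear E x = 0),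
    card_zeros_pwLinear (fun p => Int.cast_ne_zero.2 (pathGap_ne_zero hf hα p))]
  refine congrArg card (filter_congr fun p _ => ?_)
  exact_mod_cast (Iff.rfl : pathGap n k f a b p * pathGap n k f a b (p + 1) < 0 ↔ _)

end Intersections

section Relabel

variable {n : ℕ} {g : ℤ → ℤ}

/-- The order-preserving bijection from `ℤ` onto `{m | m % n ∈ O}` that maps `[0, #O)` onto `O`. -/
def residueEnum (n : ℕ) (O : Finset ℤ) (hO : 0 < O.card) (m : ℤ) : ℤ :=
  O.orderEmbOfFin rfl ⟨(m % O.card).toNat, by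
    have := Int.emod_lt_of_pos m (by exact_mod_cast hO : (0 : ℤ) < O.card); omega⟩ +
    m / O.card * n

variable {O : Finset ℤ} (hO : 0 < O.card)
include hO

theorem residueEnum_add_card (m : ℤ) :
    residueEnum n O hO (m + O.card) = residueEnum n O hO m + n := by
  have hN : (O.card : ℤ) ≠ 0 := by exact_mod_cast hO.ne'
  simp only [residueEnum, Int.add_emod_right, Int.add_ediv_of_dvd_right (dvd_refl _),
    Int.ediv_self hN]
  ring

theorem residueEnum_strictMono (hOn : ∀ y ∈ O, 0 ≤ y ∧ y < n) :
    StrictMono (residueEnum n O hO) := by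
  intro m m' hm
  have hN : (0 : ℤ) < O.card := by exact_mod_cast hO
  have he := fun m : ℤ => hOn _ (O.orderEmbOfFin_mem rfl (⟨(m % O.card).toNat, by
    have := Int.emod_lt_of_pos m hN; omega⟩ : Fin O.card))
  rcases (Int.ediv_le_ediv hN hm.le).lt_or_eq with hlt | heq
  · have : m / O.card * (n : ℤ) + n ≤ m' / O.card * n := by nlinarith
    simp only [residueEnum]
    linarith [(he m).2, (he m').1]
  · simp only [residueEnum, heq, add_lt_add_iff_right, OrderEmbedding.lt_iff_lt, Fin.mk_lt_mk]
    have h₁ := Int.emod_add_mul_ediv m O.card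
    have h₂ := Int.emod_add_mul_ediv m' O.card
    have := Int.emod_nonneg m hN.ne'
    rw [heq] at h₁
    omega

theorem range_residueEnum (hOn : ∀ y ∈ O, 0 ≤ y ∧ y < n) :
    Set.range (residueEnum n O hO) = {m : ℤ | m % (n : ℤ) ∈ O} := by
  have hN : (0 : ℤ) < O.card := by exact_mod_cast hO
  ext y
  constructor
  · rintro ⟨m, rfl⟩
    have hmem := O.orderEmbOfFin_mem rfl (⟨(m % O.card).toNat, by
      have := Int.emod_lt_of_pos m hN; omega⟩ : Fin O.card)
    show residueEnum n O hO m % (n : ℤ) ∈ O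
    simp only [residueEnum, Int.add_mul_emod_self_right,
      Int.emod_eq_of_lt (hOn _ hmem).1 (hOn _ hmem).2]
    exact hmem
  · intro hy
    obtain ⟨i, hi⟩ : y % n ∈ Set.range (O.orderEmbOfFin rfl) := by
      rw [Finset.range_orderEmbOfFin]; exact hy
    refine ⟨i + O.card * (y / n), ?_⟩
    have hidx : ((i + O.card * (y / n)) % O.card).toNat = i := by
      rw [Int.add_mul_emod_self_left, Int.emod_eq_of_lt (by positivity) (by exact_mod_cast i.2)]
      simp
    have hdiv : (i + O.card * (y / n)) / O.card = y / n := by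
      rw [Int.add_mul_ediv_left _ _ hN.ne', Int.ediv_eq_zero_of_lt (by positivity)
        (by exact_mod_cast i.2), zero_add]
    simp only [residueEnum, hidx, hdiv, Fin.eta, hi]
    linarith [Int.emod_add_mul_ediv y n, mul_comm (n : ℤ) (y / n)]

theorem exists_isRelabelOn_s10 (hOn : ∀ y ∈ O, 0 ≤ y ∧ y < n)
    (hclosed : ∀ m : ℤ, m % (n : ℤ) ∈ O → g m % n ∈ O) :
    ∃ g₁, IsRelabelOn n g {m : ℤ | m % (n : ℤ) ∈ O} O.card g₁ := by
  have hrange := range_residueEnum hO hOn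
  have hmaps : ∀ m, ∃ m', residueEnum n O hO m' = g (residueEnum n O hO m) := fun m => by
    have : g (residueEnum n O hO m) ∈ {m : ℤ | m % (n : ℤ) ∈ O} :=
      hclosed _ (show _ ∈ {m : ℤ | m % (n : ℤ) ∈ O} from hrange ▸ Set.mem_range_self m)
    rwa [← hrange] at this
  choose g₁ hg₁ using hmaps
  exact ⟨g₁, residueEnum n O hO, residueEnum_strictMono hO hOn, residueEnum_add_card hO, hrange,
    fun m => (hg₁ m).symm⟩

end Relabel

section CycleParams

variable {n N : ℕ} {g : ℤ → ℤ} {x K : ℤ}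

theorem iterate_modEq_iterate_mod (hper : ∀ m, g (m + n) = g m + n)
    (hret : g^[N] x = x + K * n) (r : ℕ) : g^[r] x ≡ g^[r % N] x [ZMOD n] := by
  have hmul : ∀ t : ℕ, g^[N * t] x = x + t * K * n := fun t => by
    induction t with
    | zero => simp
    | succ t ih =>
      rw [Nat.mul_succ, iterate_add_apply, hret, iterate_add_mul_of_map_add hper, ih]
      push_cast
      ring
  conv_lhs => rw [← Nat.mod_add_div r N, iterate_add_apply, hmul, iterate_add_mul_of_map_add hper]
  exact Int.add_mul_emod_self_right _ _ _

variable (hper : ∀ m, g (m + n) = g m + n) (hret : g^[N] x = x + K * n) (hN : 0 < N)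
  (hNn : N ≤ n)
include hper hret hN hNn

theorem iterate_emod_mem_orbitF (r : ℕ) : g^[r] x % n ∈ orbitF n g x :=
  mem_image.2 ⟨r % N, mem_range.2 ((Nat.mod_lt r hN).trans_le hNn),
    (iterate_modEq_iterate_mod hper hret r).symm⟩

theorem orbitF_eq_image_range : orbitF n g x = (range N).image (fun r => g^[r] x % n) := by
  ext y
  constructor
  · intro hy
    obtain ⟨r, -, rfl⟩ := mem_image.1 hy
    exact mem_image.2 ⟨r % N, mem_range.2 (Nat.mod_lt r hN),
      (iterate_modEq_iterate_mod hper hret r).symm⟩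
  · intro hy
    obtain ⟨r, hr, rfl⟩ := mem_image.1 hy
    exact mem_image.2 ⟨r, mem_range.2 ((mem_range.1 hr).trans_le hNn), rfl⟩

theorem emod_mem_orbitF_map {m : ℤ} (hm : m % n ∈ orbitF n g x) : g m % n ∈ orbitF n g x := by
  obtain ⟨r, -, hr⟩ := mem_image.1 hm
  have : g m ≡ g^[r + 1] x [ZMOD n] := by
    rw [iterate_succ_apply']
    exact Int.ModEq.map_of_map_add hper hr.symm
  rw [this]
  exact iterate_emod_mem_orbitF hper hret hN hNn (r + 1)

omit hret hN hNn in
theorem IsRelabelOn.winding_eq_s10 {S : Set ℤ} {g₁ : ℤ → ℤ} (hrel : IsRelabelOn n g S N g₁)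
    (hinj : Injective g) (hbdd : IsBoundedFn n g) (hN : 0 < N) (hxS : x ∈ S)
    (hret : g^[N] x = x + K * n) (hres : Set.InjOn (fun r => g^[r] x % n) (range N)) :
    (winding N g₁ : ℤ) = K := by
  obtain ⟨φ, hmono, hshift, rfl, hcomm⟩ := hrel
  obtain ⟨m₀, rfl⟩ := hxS
  have hiter : ∀ r, φ (g₁^[r] m₀) = g^[r] (φ m₀) := fun r =>
    (Semiconj.iterate_right (fun m => (hcomm m).symm) r) m₀
  have hper₁ : ∀ m, g₁ (m + N) = g₁ m + N := fun m =>
    hmono.injective (by rw [← hcomm, hshift, hper, hcomm, hshift])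
  have hinj₁ : Injective g₁ := fun m m' h => hmono.injective (hinj (by rw [hcomm, hcomm, h]))
  have hbdd₁ : IsBoundedFn N g₁ := fun m =>
    ⟨hmono.le_iff_le.1 (by rw [← hcomm]; exact (hbdd _).1),
      hmono.le_iff_le.1 (by rw [← hcomm, hshift]; exact (hbdd _).2)⟩
  have hres₁ : Set.InjOn (fun r => g₁^[r] m₀ % N) (range N) := fun r hr s hs h =>
    hres hr hs (by have h' := Int.ModEq.map_of_map_add hshift h; rwa [hiter, hiter] at h')
  have hret₁ : g₁^[N] m₀ = m₀ + K * N :=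
    hmono.injective (by rw [hiter, hret, map_add_mul_of_map_add_s10 hshift])
  have hW := iterate_eq_add_mul_winding hinj₁ hper₁ hbdd₁ hres₁
  rw [hret₁] at hW
  have hN' : (N : ℤ) ≠ 0 := by exact_mod_cast hN.ne'
  exact (mul_left_cancel₀ hN' (by linarith)).symm

theorem resParamsAt_eq_of_iterate_s10 (hinj : Injective g) (hbdd : IsBoundedFn n g)
    (hres : Set.InjOn (fun r => g^[r] x % n) (range N)) :
    ((resParamsAt n g x).1 : ℤ) = K ∧ (resParamsAt n g x).2 = N := by
  have hcard : (orbitF n g x).card = N := by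
    rw [orbitF_eq_image_range hper hret hN hNn, card_image_of_injOn hres, card_range]
  have hn : (0 : ℤ) < n := by exact_mod_cast hN.trans_le hNn
  have hOn : ∀ y ∈ orbitF n g x, 0 ≤ y ∧ y < n := fun y hy => by
    obtain ⟨r, -, rfl⟩ := mem_image.1 hy
    exact ⟨Int.emod_nonneg _ hn.ne', Int.emod_lt_of_pos _ hn⟩
  have hxS : x ∈ {m : ℤ | m % (n : ℤ) ∈ orbitF n g x} :=
    iterate_emod_mem_orbitF hper hret hN hNn 0
  obtain ⟨g₁, hg₁⟩ := exists_isRelabelOn_s10 (hcard ▸ hN) hOn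
    (fun m => emod_mem_orbitF_map hper hret hN hNn)
  have hwind : ∀ g₁', IsRelabelOn n g {m : ℤ | m % (n : ℤ) ∈ orbitF n g x} N g₁' →
      (winding N g₁' : ℤ) = K := fun g₁' h =>
    h.winding_eq_s10 hper hinj hbdd hN hxS hret hres
  rw [hcard] at hg₁
  have hset : {k₁ : ℕ | ∃ g₁', IsRelabelOn n g {m : ℤ | m % (n : ℤ) ∈ orbitF n g x} N g₁' ∧
      winding N g₁' = k₁} = {winding N g₁} := by
    ext w
    constructor
    · rintro ⟨g₁', hg₁', rfl⟩
      exact_mod_cast (hwind g₁' hg₁').trans (hwind g₁ hg₁).symm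
    · rintro rfl
      exact ⟨g₁, hg₁, rfl⟩
  unfold resParamsAt
  rw [hcard, hset, csInf_singleton]
  exact ⟨hwind g₁ hg₁, rfl⟩

end CycleParams

section Resolve

variable {n : ℕ} {f : ℤ → ℤ} {i j : ℤ}

def affTransp (n : ℕ) (i j m : ℤ) : ℤ :=
  if m % (n : ℤ) = i % (n : ℤ) then m + (j - i)
  else if m % (n : ℤ) = j % (n : ℤ) then m + (i - j) else m

theorem affTransp_involutive (hij : ¬ i ≡ j [ZMOD n]) : Involutive (affTransp n i j) := by
  have hleft : ∀ m, m ≡ i [ZMOD n] → affTransp n i j m = m + (j - i) := fun m h => if_pos h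
  have hright : ∀ m, ¬ m ≡ i [ZMOD n] → m ≡ j [ZMOD n] → affTransp n i j m = m + (i - j) :=
    fun m h h' => (if_neg h).trans (if_pos h')
  intro m
  by_cases hi : m ≡ i [ZMOD n]
  · have h : m + (j - i) ≡ j [ZMOD n] := by simpa using hi.add_right (j - i)
    rw [hleft m hi, hright _ (fun h' => hij (h'.symm.trans h)) h]
    ring
  by_cases hj : m ≡ j [ZMOD n]
  · rw [hright m hi hj, hleft _ (by simpa using hj.add_right (i - j))]
    ring
  · have hfix : affTransp n i j m = m := (if_neg hi).trans (if_neg hj)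
    rw [hfix, hfix]

theorem map_add_sub_of_modEq (hper : ∀ m, f (m + n) = f m + n) {m : ℤ} (h : m ≡ i [ZMOD n])
    (j : ℤ) : f (m + (j - i)) = f j + (m - i) := by
  obtain ⟨t, ht⟩ := h.symm.dvd
  rw [show m + (j - i) = j + t * n by linarith [mul_comm (n : ℤ) t], map_add_mul_of_map_add_s10 hper]
  linarith [mul_comm (n : ℤ) t]

theorem resolve_eq_comp_affTransp (hper : ∀ m, f (m + n) = f m + n) :
    resolve n f i j = f ∘ affTransp n i j := by
  funext m
  simp only [resolve, affTransp, comp_apply]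
  split_ifs with hi hj
  · exact (map_add_sub_of_modEq hper hi j).symm
  · exact (map_add_sub_of_modEq hper hj i).symm
  · rfl

theorem resolve_map_add (hper : ∀ m, f (m + n) = f m + n) (m : ℤ) :
    resolve n f i j (m + n) = resolve n f i j m + n := by
  simp only [resolve, Int.add_emod_right, hper]
  split_ifs <;> ring

theorem resolve_injective (hinj : Injective f) (hper : ∀ m, f (m + n) = f m + n)
    (hij : ¬ i ≡ j [ZMOD n]) : Injective (resolve n f i j) := by
  rw [resolve_eq_comp_affTransp hper]
  exact hinj.comp (affTransp_involutive hij).injective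

theorem isBoundedFn_resolve (hbdd : IsBoundedFn n f) (hij : i < j) (hfij : f j < f i) :
    IsBoundedFn n (resolve n f i j) := fun m => by
  have := hbdd i; have := hbdd j; have := hbdd m
  simp only [resolve]
  split_ifs <;> constructor <;> omega

theorem resolve_apply_of_not_modEq {m : ℤ} (hi : ¬ m ≡ i [ZMOD n]) (hj : ¬ m ≡ j [ZMOD n]) :
    resolve n f i j m = f m := by
  simp only [resolve, show ¬ m % (n : ℤ) = i % n from hi, show ¬ m % (n : ℤ) = j % n from hj,
    if_false]

theorem not_modEq_of_inversion (hper : ∀ m, f (m + n) = f m + n) (hij : i < j)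
    (hfij : f j < f i) : ¬ i ≡ j [ZMOD n] := by
  intro h
  obtain ⟨t, ht⟩ := h.dvd
  have hfj : f j = f i + t * n := by
    rw [show j = i + t * n by linarith [mul_comm (n : ℤ) t], map_add_mul_of_map_add_s10 hper]
  nlinarith

end Resolve

section ResolvedCycle

noncomputable def resolvedParams (n : ℕ) (f : ℤ → ℤ) (i j : ℤ) : ℤ × ℤ :=
  ((resParamsAt n (resolve n f i j) i).1, (resParamsAt n (resolve n f i j) i).2)

variable {k n : ℕ} {f : ℤ → ℤ} {i j p q u v : ℤ} (hf : IsTheta k n f)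
  (hi : i = bigPt n k f p + u * n) (hj : j = bigPt n k f q + v * n)
include hf hi hj

theorem resolve_iterate_succ {r : ℕ} (hr : (r : ℤ) < (p - q) % n) :
    (resolve n f i j)^[r + 1] i = bigPt n k f (q + (r + 1)) + v * n := by
  have hn : (0 : ℤ) < n := by exact_mod_cast hf.pos
  induction r with
  | zero =>
    simp only [zero_add, iterate_one, Nat.cast_zero]
    rw [resolve, if_pos rfl, sub_self, add_zero, hj, map_add_mul_of_map_add_s10 hf.map_add,
      bigPt_succ hf]
  | succ r ih =>
    have hlt : (r : ℤ) + 1 < n := by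
      have := Int.emod_lt_of_pos (p - q) hn; push_cast at hr; omega
    have hs : ((r : ℤ) + 1) ∈ Set.Ico 0 (n : ℤ) := ⟨by positivity, hlt⟩
    rw [iterate_succ_apply', ih (by push_cast at hr ⊢; omega), resolve_apply_of_not_modEq,
      map_add_mul_of_map_add_s10 hf.map_add, ← bigPt_succ hf]
    · push_cast; ring_nf
    · rw [hi]
      intro h
      have := Int.eq_emod_sub_of_add_modEq hs ((bigPt_modEq_iff hf).1 (by
        simpa [Int.ModEq, Int.add_mul_emod_self_right] using h))
      push_cast at hr
      omega
    · rw [hj]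
      intro h
      have := Int.eq_emod_sub_of_add_modEq hs ((bigPt_modEq_iff hf).1 (by
        simpa [Int.ModEq, Int.add_mul_emod_self_right] using h))
      simp at this
      omega

theorem resolve_iterate_eq_add_mul {N : ℕ} (hN : (N : ℤ) = (p - q) % n) (hNpos : 0 < N) :
    (resolve n f i j)^[N] i = i + (v - u - (p - q) / n * k) * n := by
  obtain ⟨r, rfl⟩ := Nat.exists_eq_add_one_of_ne_zero hNpos.ne'
  push_cast at hN
  rw [resolve_iterate_succ hf hi hj (by omega), hN,
    show q + (p - q) % n = p + -((p - q) / n) * n by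
      linarith [Int.emod_add_mul_ediv (p - q) n, mul_comm (n : ℤ) ((p - q) / n)],
    bigPt_add_mul, hi]
  ring

theorem injOn_resolve_iterate_emod {N : ℕ} (hN : (N : ℤ) = (p - q) % n) :
    Set.InjOn (fun r => (resolve n f i j)^[r] i % n) (range N) := by
  have hn : (0 : ℤ) < n := by exact_mod_cast hf.pos
  have hlt := Int.emod_lt_of_pos (p - q) hn
  -- the cycle visits the classes of `bigPt (q + 1), …, bigPt (q + N)`, the last one being `i`'s
  set idx : ℕ → ℤ := fun r => if r = 0 then (p - q) % n else r
  have hidx : ∀ r < N, idx r ∈ Set.Ico 0 (n : ℤ) := fun r hr => by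
    simp only [idx]; split_ifs <;> constructor <;> omega
  have hmod : ∀ r < N, (resolve n f i j)^[r] i ≡ bigPt n k f (q + idx r) [ZMOD n] := by
    intro r hr
    rcases Nat.eq_zero_or_eq_succ_pred r with rfl | hr'
    · rw [show idx 0 = (p - q) % n from if_pos rfl, iterate_zero_apply, hi,
        show q + (p - q) % n = p + -((p - q) / n) * n by
          linarith [Int.emod_add_mul_ediv (p - q) n, mul_comm (n : ℤ) ((p - q) / n)],
        bigPt_add_mul]
      simp only [Int.ModEq, Int.add_mul_emod_self_right,
        show -((p - q) / n) * (k * n) = -((p - q) / n) * k * n by ring]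
    · rw [show idx r = r from if_neg (by omega), hr', resolve_iterate_succ hf hi hj (by omega)]
      push_cast
      exact Int.add_mul_emod_self_right _ _ _
  intro r hr s hs hrs
  have hr := mem_range.1 hr
  have hs := mem_range.1 hs
  have h := Int.eq_emod_sub_of_add_modEq (hidx r hr)
    ((bigPt_modEq_iff hf).1 (((hmod r hr).symm.trans hrs).trans (hmod s hs)))
  rw [add_sub_cancel_left, Int.emod_eq_of_lt (hidx s hs).1 (hidx s hs).2] at h
  simp only [idx] at h
  split_ifs at h <;> omega

theorem resolvedParams_eq (hij : i < j) (hfij : f j < f i) :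
    resolvedParams n f i j = (v - u - (p - q) / n * k, (p - q) % n) := by
  have hn : (0 : ℤ) < n := by exact_mod_cast hf.pos
  have hij' := not_modEq_of_inversion hf.map_add hij hfij
  have hpq : (p - q) % n ≠ 0 := fun h => hij' <| by
    have hpq : bigPt n k f p ≡ bigPt n k f q [ZMOD n] :=
      (bigPt_modEq_iff hf).2 (Int.modEq_iff_dvd.2 (Int.dvd_of_emod_eq_zero h)).symm
    simpa [Int.ModEq, hi, hj, Int.add_mul_emod_self_right] using hpq
  obtain ⟨N, hN⟩ : ∃ N : ℕ, (N : ℤ) = (p - q) % n :=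
    ⟨_, Int.toNat_of_nonneg (Int.emod_nonneg _ hn.ne')⟩
  have hNpos : 0 < N := by have := Int.emod_nonneg (p - q) hn.ne'; omega
  have hNn : N ≤ n := by have := Int.emod_lt_of_pos (p - q) hn; omega
  obtain ⟨h₁, h₂⟩ := resParamsAt_eq_of_iterate_s10 (resolve_map_add hf.map_add)
    (resolve_iterate_eq_add_mul hf hi hj hN hNpos) hNpos hNn
    (resolve_injective hf.injective hf.map_add hij') (isBoundedFn_resolve hf.bounded hij hfij)
    (injOn_resolve_iterate_emod hf hi hj hN)
  exact Prod.ext h₁ (by rw [← hN, ← h₂]; rfl)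

end ResolvedCycle

section Inversions

variable {k n : ℕ} {f : ℤ → ℤ} {a b i j p u : ℤ}

theorem sub_pathGap_eq (hi : i = bigPt n k f p + u * n) :
    i - pathGap n k f a b p = bigPt n k f (p - b) + (a + u) * n := by
  rw [pathGap, hi]
  ring

theorem map_sub_map_sub_pathGap (hf : IsTheta k n f) (hi : i = bigPt n k f p + u * n) :
    f i - f (i - pathGap n k f a b p) = pathGap n k f a b (p + 1) := by
  rw [sub_pathGap_eq hi, hi, map_add_mul_of_map_add_s10 hf.map_add, map_add_mul_of_map_add_s10 hf.map_add,
    ← bigPt_succ hf, ← bigPt_succ hf, pathGap, show p + 1 - b = p - b + 1 by ring]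
  ring

theorem resolvedParams_eq_iff (hf : IsTheta k n f) (hij : i < j) (hfij : f j < f i)
    (hi : i = bigPt n k f p + u * n) :
    resolvedParams n f i j = (a - b / n * k, b % n) ↔ j = i - pathGap n k f a b p := by
  have hn : (n : ℤ) ≠ 0 := by exact_mod_cast hf.pos.ne'
  constructor
  · intro h
    obtain ⟨q, v, -, hj⟩ := exists_eq_bigPt_add hf j
    rw [resolvedParams_eq hf hi hj hij hfij, Prod.mk.injEq] at h
    obtain ⟨t, ht⟩ := Int.ModEq.dvd (Int.ModEq.symm h.2)
    have hq : q = p - b + -t * n := by linarith [mul_comm (n : ℤ) t]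
    rw [hq, show p - (p - b + -t * n) = b + t * n by ring,
      Int.add_mul_ediv_right _ _ hn] at h
    rw [sub_pathGap_eq hi, hj, hq, bigPt_add_mul]
    linear_combination (n : ℤ) * h.1
  · intro hj
    rw [sub_pathGap_eq hi] at hj
    rw [resolvedParams_eq hf hi hj hij hfij, sub_sub_cancel, add_sub_cancel_right]

end Inversions

section Rises

variable {k n : ℕ} {f : ℤ → ℤ} {a b : ℤ}

theorem mk_mem_inversions (hbdd : IsBoundedFn n f) {i j : ℤ} (hi : i ∈ Set.Icc 1 (n : ℤ))
    (hij : i < j) (hfij : f j < f i) : (i, j) ∈ inversions n f := by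
  obtain ⟨hi₁, hi₂⟩ := hi
  have := hbdd i
  have := hbdd j
  simp only [inversions, mem_filter, mem_product, mem_Icc]
  exact ⟨⟨⟨hi₁, hi₂⟩, by omega, by omega⟩, hij, hfij⟩

theorem card_filter_pathGap_rise_eq (hf : IsTheta k n f) :
    #{p ∈ Ico (0 : ℤ) n | pathGap n k f a b p < 0 ∧ 0 < pathGap n k f a b (p + 1)} =
      #{z ∈ inversions n f | (a - b / n * k, b % n) = resolvedParams n f z.1 z.2} := by
  have hrepr : ∀ p, ∃ u, modIcc n (bigPt n k f p) = bigPt n k f p + u * n := fun p => by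
    obtain ⟨u, hu⟩ := (modIcc_modEq (n := n) (bigPt n k f p)).symm.dvd
    exact ⟨u, by linarith [mul_comm (n : ℤ) u]⟩
  refine card_bij (fun p _ => (modIcc n (bigPt n k f p),
    modIcc n (bigPt n k f p) - pathGap n k f a b p)) ?_ ?_ ?_
  · intro p hp
    obtain ⟨-, hneg, hpos⟩ := mem_filter.1 hp |>.imp_left mem_Ico.1
    obtain ⟨u, hu⟩ := hrepr p
    have hfx := map_sub_map_sub_pathGap (a := a) (b := b) hf hu
    refine mem_filter.2 ⟨mk_mem_inversions hf.bounded (modIcc_mem hf.pos _) (by omega)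
      (by omega), ?_⟩
    exact ((resolvedParams_eq_iff hf (by omega) (by omega) hu).2 rfl).symm
  · intro p hp p' hp' h
    have hmodEq : bigPt n k f p ≡ bigPt n k f p' [ZMOD n] :=
      ((modIcc_modEq _).symm.trans (congrArg (· % (n : ℤ)) (congrArg Prod.fst h))).trans
        (modIcc_modEq _)
    exact ((bigPt_modEq_iff hf).1 hmodEq).eq_of_mem_Ico (c := 0)
      (by simpa using mem_Ico.1 (mem_filter.1 hp).1) (by simpa using mem_Ico.1 (mem_filter.1 hp').1)
  · rintro ⟨i, j⟩ hz
    simp only [inversions, mem_filter, mem_product, mem_Icc] at hz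
    obtain ⟨⟨⟨hi, -⟩, hij, hfij⟩, hparams⟩ := hz
    obtain ⟨p, u, hp, hi'⟩ := exists_eq_bigPt_add hf i
    have hj := (resolvedParams_eq_iff hf hij hfij hi').1 hparams.symm
    have hfx := map_sub_map_sub_pathGap (a := a) (b := b) hf hi'
    rw [← hj] at hfx
    have hx : modIcc n (bigPt n k f p) = i := modIcc_eq_of_modEq hf.pos hi (by
      rw [hi']; exact Int.add_mul_emod_self_right _ _ _)
    refine ⟨p, mem_filter.2 ⟨mem_Ico.2 hp, by omega, by omega⟩, ?_⟩
    simp only [hx, Prod.mk.injEq, true_and]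
    omega

end Rises

theorem count_invMultiset_eq_card_filter (n : ℕ) (f : ℤ → ℤ) (c : ℤ × ℤ) :
    Multiset.count c (Multiset.map (fun p : ℕ × ℕ => ((p.1 : ℤ), (p.2 : ℤ))) (invMultiset n f)) =
      #{z ∈ inversions n f | c = resolvedParams n f z.1 z.2} := by
  rw [invMultiset, Multiset.map_map, Multiset.count_map, card_def, filter_val]
  rfl

/-- For `f ∈ Θ_{k,n}` with big path `P_∞` and a shift `α = (b,a) ∈ ℤ²`
(horizontal shift `b`, vertical shift `a`) which is not a multiple of `(n,k)`:
the multiplicity in `F'(f)` of the normalization of `(a,b)` modulo `ℤ·(k,n)`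
equals half the number of intersection points of `P_∞` with `P_∞ + α`,
counted modulo the translation `(n,k)` (i.e. with horizontal coordinate in `[0,n)`). -/
theorem positroid_stmt10 (k n : ℕ) (f : ℤ → ℤ) (hf : IsTheta k n f) (a b : ℤ)
    (hα : ¬ ∃ t : ℤ, a = t * (k : ℤ) ∧ b = t * (n : ℤ)) :
    2 * Multiset.count (a - (b / (n : ℤ)) * (k : ℤ), b % (n : ℤ))
        (Multiset.map (fun p : ℕ × ℕ => ((p.1 : ℤ), (p.2 : ℤ))) (invMultiset n f)) =
      Nat.card {p : ℝ × ℝ // p ∈ bigPath n k f ∧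
        p ∈ (fun q : ℝ × ℝ => (q.1 + (b : ℝ), q.2 + (a : ℝ))) '' bigPath n k f ∧
        p.1 ∈ Set.Ico (0 : ℝ) (n : ℝ)} := by
  rw [card_bigPath_inter hf hα, card_filter_mul_neg_eq_two_mul (pathGap_ne_zero hf hα)
      (by simpa using pathGap_add_n (n := n) (k := k) (f := f) a b 0),
    card_filter_pathGap_rise_eq hf, count_invMultiset_eq_card_filter]
end

section
/- Given a concave profile H = (0 = H_0, H_1, ..., H_n = k), the associated permutation f_H belongs to Θ_{k,n} and satisfies ⌊f^r(0)/n⌋ = ⌊H_r⌋ for all 0 ≤ r ≤ n, where f = f_H. -/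
open Finset

/-! Matching orders make the residues `f^r(0) mod n`, `r < n`, pairwise distinct, so `f̄` is an
`n`-cycle and `f^n(0) ≡ 0`. Both `r ↦ f^r(0)/n` and `r ↦ H_r` grow by less than `1` per step, so
their floors go up by exactly one at the steps where the fractional part drops; these steps are
the same for both sequences, hence the floors agree and `f^n(0) = kn`. Finally `n` times the
winding number is `∑_{i=1}^n (f(i) - i)`, and running over the cycle this sum telescopes to
`f^n(0) = kn`. -/

lemma eq_iff_eq_of_lt_iff_lt {α β : Type*} [LinearOrder α] [LinearOrder β] {a b : α} {c d : β}
    (hab : a < b ↔ c < d) (hba : b < a ↔ d < c) : a = b ↔ c = d := by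
  simp only [le_antisymm_iff, ← not_lt, hab, hba, and_comm]

lemma lt_iff_lt_on_Iic_of_apply_eq_apply_zero {α β : Type*} [LT α] [LT β] {u : ℕ → α}
    {v : ℕ → β} {n : ℕ} (hn : 0 < n) (hu : u n = u 0) (hv : v n = v 0)
    (h : ∀ i j, i < n → j < n → (u i < u j ↔ v i < v j)) (i j : ℕ) (hi : i ≤ n) (hj : j ≤ n) :
    u i < u j ↔ v i < v j := by
  have hreduce : ∀ i ≤ n, ∃ i' < n, u i = u i' ∧ v i = v i' := by
    intro i hi
    rcases hi.lt_or_eq with hi | rfl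
    · exact ⟨i, hi, rfl, rfl⟩
    · exact ⟨0, hn, hu, hv⟩
  obtain ⟨i', hi', hui, hvi⟩ := hreduce i hi
  obtain ⟨j', hj', huj, hvj⟩ := hreduce j hj
  rw [hui, huj, hvi, hvj]
  exact h i' j' hi' hj'

section Periodic

variable {n : ℕ} {f : ℤ → ℤ}

lemma periodic_sub_self (hper : ∀ i, f (i + n) = f i + n) :
    Function.Periodic (fun i => f i - i) (n : ℤ) := by
  intro i
  show f (i + n) - (i + n) = f i - i
  rw [hper]
  ring

lemma map_emod_sub_emod (hper : ∀ i, f (i + n) = f i + n) (x : ℤ) :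
    f (x % n) - x % n = f x - x := by
  simpa [Int.emod_def, mul_comm] using (periodic_sub_self hper).sub_int_mul_eq (x / n) (x := x)

lemma emod_eq_of_map_emod_eq (hper : ∀ i, f (i + n) = f i + n) (hinj : Function.Injective f)
    {x y : ℤ} (h : f x % n = f y % n) : x % n = y % n := by
  obtain ⟨m, hm⟩ := Int.ModEq.dvd h
  have hshift : f (x + m * n) = f y := by
    have : f (x + m * n) - (x + m * n) = f x - x := (periodic_sub_self hper).int_mul m x
    linarith
  rw [← hinj hshift, Int.add_mul_emod_self_right]

lemma image_iterate_emod_eq_Ico {a : ℤ}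
    (hres : Set.InjOn (fun r => f^[r] a % n) (Set.Iio n)) :
    (range n).image (fun r => f^[r] a % n) = Ico 0 (n : ℤ) := by
  refine eq_of_subset_of_card_le ?_ ?_
  · intro x hx
    obtain ⟨r, hr, rfl⟩ := mem_image.1 hx
    have hn : (0 : ℤ) < n := by have := mem_range.1 hr; omega
    exact mem_Ico.2 ⟨Int.emod_nonneg _ hn.ne', Int.emod_lt_of_pos _ hn⟩
  · rw [card_image_of_injOn (by rwa [coe_range]), Int.card_Ico, card_range]
    simp

lemma isCycleMod_of_injOn (hn : 0 < n)
    (hres : Set.InjOn (fun r => f^[r] 0 % n) (Set.Iio n)) : IsCycleMod n f := by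
  intro j
  have hj : j % n ∈ Ico 0 (n : ℤ) :=
    mem_Ico.2 ⟨Int.emod_nonneg _ (by omega), Int.emod_lt_of_pos _ (by omega)⟩
  rw [← image_iterate_emod_eq_Ico hres] at hj
  simpa using hj

lemma iterate_emod_eq_of_injOn (hper : ∀ i, f (i + n) = f i + n) (hinj : Function.Injective f)
    (hn : 0 < n) {a : ℤ} (hres : Set.InjOn (fun r => f^[r] a % n) (Set.Iio n)) :
    f^[n] a % n = a % n := by
  have hmem : f^[n] a % n ∈ Ico 0 (n : ℤ) :=
    mem_Ico.2 ⟨Int.emod_nonneg _ (by omega), Int.emod_lt_of_pos _ (by omega)⟩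
  rw [← image_iterate_emod_eq_Ico hres] at hmem
  obtain ⟨r, hr, hrn⟩ := mem_image.1 hmem
  rcases r with _ | s
  · simpa using hrn.symm
  · have hlast : f^[n] a = f (f^[n - 1] a) := by
      rw [← Function.iterate_succ_apply' f, Nat.succ_eq_add_one, Nat.sub_add_cancel hn]
    rw [Function.iterate_succ_apply', hlast] at hrn
    have hr : s + 1 < n := mem_range.1 hr
    have := hres (Set.mem_Iio.2 (by omega)) (Set.mem_Iio.2 (by omega))
      (emod_eq_of_map_emod_eq hper hinj hrn)
    omega

lemma sum_Ico_sub_eq_iterate_sub (hper : ∀ i, f (i + n) = f i + n) {a : ℤ}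
    (hres : Set.InjOn (fun r => f^[r] a % n) (Set.Iio n)) :
    ∑ i ∈ Ico 0 (n : ℤ), (f i - i) = f^[n] a - a := by
  rw [← image_iterate_emod_eq_Ico hres, sum_image (by rwa [coe_range])]
  simp only [map_emod_sub_emod hper, ← Function.iterate_succ_apply' f]
  exact sum_range_sub (fun r => f^[r] a) n

lemma sum_Icc_one_eq_sum_Ico_zero {M : Type*} [AddCommMonoid M] {g : ℤ → M}
    (hg : Function.Periodic g (n : ℤ)) (hn : 0 < n) :
    ∑ i ∈ Icc 1 (n : ℤ), g i = ∑ i ∈ Ico 0 (n : ℤ), g i := by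
  have htop : Icc 1 (n : ℤ) = insert (n : ℤ) (Ico 1 (n : ℤ)) :=
    (Ico_insert_right (by omega)).symm
  have hbot : Ico 0 (n : ℤ) = insert 0 (Ico 1 (n : ℤ)) := by
    ext x
    simp only [mem_Ico, mem_insert]
    omega
  rw [htop, hbot, sum_insert (by simp), sum_insert (by simp), ← zero_add (n : ℤ), hg 0]

end Periodic

section Bounded

variable {n : ℕ} {f : ℤ → ℤ}

lemma lt_map_of_map_emod_ne (hbd : IsBoundedFn n f) {x : ℤ} (h : f x % n ≠ x % n) :
    x < f x ∧ f x < x + n := by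
  obtain ⟨hlo, hhi⟩ := hbd x
  refine ⟨lt_of_le_of_ne hlo fun heq => h ?_, lt_of_le_of_ne hhi fun heq => h ?_⟩
  · rw [← heq]
  · simp [heq]

lemma winding_mul_eq_sum_Icc (hf : IsBAP n f) :
    (winding n f : ℤ) * n = ∑ i ∈ Icc 1 (n : ℤ), (f i - i) := by
  obtain ⟨⟨hbij, hper⟩, hbd⟩ := hf
  -- `g` is the reduction `f̄` on `[1, n]`: boundedness makes `n < f i` the only case needing a shift
  set g : ℤ → ℤ := fun i => if (n : ℤ) < f i then f i - n else f i with hg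
  have hg_mem : ∀ i ∈ Icc 1 (n : ℤ), g i ∈ Icc 1 (n : ℤ) := by
    intro i hi
    have := hbd i
    simp only [mem_Icc, hg] at hi ⊢
    split_ifs <;> omega
  have hg_inj : Set.InjOn g (Icc 1 (n : ℤ)) := by
    intro i hi j hj hij
    simp only [coe_Icc, Set.mem_Icc] at hi hj
    have hmod : f i % n = f j % n := by
      simpa [hg, apply_ite (· % (n : ℤ))] using congrArg (· % (n : ℤ)) hij
    have hdvd : (n : ℤ) ∣ j - i := Int.ModEq.dvd (emod_eq_of_map_emod_eq hper hbij.1 hmod)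
    have := Int.eq_zero_of_abs_lt_dvd hdvd (abs_sub_lt_iff.2 ⟨by omega, by omega⟩)
    omega
  have hg_sum : ∑ i ∈ Icc 1 (n : ℤ), g i = ∑ i ∈ Icc 1 (n : ℤ), i :=
    sum_nbij g hg_mem hg_inj
      (surjOn_of_injOn_of_card_le g hg_mem hg_inj le_rfl) (fun _ _ => rfl)
  have hsplit : ∀ i, f i - i = (g i - i) + if (n : ℤ) < f i then (n : ℤ) else 0 := by
    intro i
    simp only [hg]
    split_ifs <;> ring
  rw [sum_congr rfl (fun i _ => hsplit i), sum_add_distrib, sum_sub_distrib, hg_sum, sub_self,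
    zero_add, ← sum_filter, sum_const, nsmul_eq_mul]
  rfl

lemma winding_eq_of_iterate_eq (hf : IsBAP n f) (hn : 0 < n) {a : ℤ} {k : ℕ}
    (hres : Set.InjOn (fun r => f^[r] a % n) (Set.Iio n)) (hk : f^[n] a = a + k * n) :
    winding n f = k := by
  have hsum : (winding n f : ℤ) * n = k * n := by
    rw [winding_mul_eq_sum_Icc hf, sum_Icc_one_eq_sum_Ico_zero (periodic_sub_self hf.1.2) hn,
      sum_Ico_sub_eq_iterate_sub hf.1.2 hres, hk, add_sub_cancel_left]
  exact_mod_cast mul_right_cancel₀ (by positivity) hsum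

end Bounded

section Floor

variable {R : Type*} [CommRing R] [LinearOrder R] [IsStrictOrderedRing R] [FloorRing R]

lemma floor_eq_floor_add_ite {x y : R} (hxy : x < y) (hyx : y < x + 1) :
    ⌊y⌋ = ⌊x⌋ + if Int.fract y < Int.fract x then 1 else 0 := by
  have hx := Int.floor_add_fract x
  have hy := Int.floor_add_fract y
  have := Int.fract_nonneg x
  have := Int.fract_lt_one x
  have := Int.fract_nonneg y
  have := Int.fract_lt_one y
  have hlo : ((⌊x⌋ - 1 : ℤ) : R) < ⌊y⌋ := by push_cast; linarith
  have hhi : (⌊y⌋ : R) < ((⌊x⌋ + 2 : ℤ) : R) := by push_cast; linarith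
  split_ifs with h
  · have hlo' : ((⌊x⌋ : ℤ) : R) < ⌊y⌋ := by linarith
    have := Int.cast_lt.1 hlo'
    have := Int.cast_lt.1 hhi
    omega
  · have hhi' : (⌊y⌋ : R) < ((⌊x⌋ + 1 : ℤ) : R) := by push_cast; linarith
    have := Int.cast_lt.1 hlo
    have := Int.cast_lt.1 hhi'
    omega

lemma fract_ne_of_lt_of_lt {x y : R} (hxy : x < y) (hyx : y < x + 1) :
    Int.fract y ≠ Int.fract x := by
  intro h
  have hfloor := floor_eq_floor_add_ite hxy hyx
  rw [if_neg h.not_lt, add_zero] at hfloor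
  have := Int.floor_add_fract x
  have := Int.floor_add_fract y
  rw [hfloor, h] at *
  linarith

lemma floor_eq_floor_of_fract_lt_iff (P Q : ℕ → R) (m : ℕ) (h0 : ⌊P 0⌋ = ⌊Q 0⌋)
    (hP : ∀ r < m, P r < P (r + 1) ∧ P (r + 1) < P r + 1)
    (hQ : ∀ r < m, Q r < Q (r + 1) ∧ Q (r + 1) < Q r + 1)
    (hfract : ∀ r < m,
      (Int.fract (P (r + 1)) < Int.fract (P r) ↔ Int.fract (Q (r + 1)) < Int.fract (Q r))) :
    ∀ r ≤ m, ⌊P r⌋ = ⌊Q r⌋ := by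
  intro r hr
  induction r with
  | zero => exact h0
  | succ r ih =>
    rw [floor_eq_floor_add_ite (hP r hr).1 (hP r hr).2,
      floor_eq_floor_add_ite (hQ r hr).1 (hQ r hr).2, ih (by omega)]
    simp only [hfract r hr]

end Floor

lemma ediv_eq_floor_of_emod_lt_iff {n : ℕ} (a : ℕ → ℤ) (Q : ℕ → ℝ) (m : ℕ)
    (h0 : a 0 / n = ⌊Q 0⌋)
    (ha : ∀ r < m, a r < a (r + 1) ∧ a (r + 1) < a r + n)
    (hQ : ∀ r < m, Q r < Q (r + 1) ∧ Q (r + 1) < Q r + 1)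
    (hemod : ∀ r < m, (a (r + 1) % n < a r % n ↔ Int.fract (Q (r + 1)) < Int.fract (Q r))) :
    ∀ r ≤ m, a r / n = ⌊Q r⌋ := by
  have hfloor : ∀ r, a r / n = ⌊(a r : ℝ) / n⌋ := fun r => by
    rw [Int.floor_div_natCast, Int.floor_intCast]
  have hn : ∀ r < m, (0 : ℝ) < n := fun r hr => by
    have := ha r hr
    exact_mod_cast (by omega : 0 < n)
  simp only [hfloor]
  refine floor_eq_floor_of_fract_lt_iff _ Q m (by rw [← hfloor, h0]) (fun r hr => ?_) hQ
    (fun r hr => ?_)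
  · have hstep : (a r : ℝ) < a (r + 1) ∧ (a (r + 1) : ℝ) < a r + n := by exact_mod_cast ha r hr
    rw [div_add_one (hn r hr).ne']
    exact ⟨div_lt_div_of_pos_right hstep.1 (hn r hr), div_lt_div_of_pos_right hstep.2 (hn r hr)⟩
  · rw [Int.fract_div_intCast_eq_div_intCast_mod, Int.fract_div_intCast_eq_div_intCast_mod,
      div_lt_div_iff_of_pos_right (hn r hr), Int.cast_lt]
    exact hemod r hr

theorem positroid_stmt14_general (k n : ℕ) (hn : 0 < n) (H : ℕ → ℝ)
    (hH0 : H 0 = 0) (hHn : H n = k)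
    (hinc : ∀ i < n, 0 < H (i + 1) - H i ∧ H (i + 1) - H i < 1)
    (hfrac : ∀ i j : ℕ, i < n → j < n → i ≠ j → Int.fract (H i) ≠ Int.fract (H j))
    (f : ℤ → ℤ) (hf : IsBAP n f)
    (horder : ∀ i j : ℕ, i < n → j < n →
      ((f^[i] 0) % (n : ℤ) < (f^[j] 0) % (n : ℤ) ↔ Int.fract (H i) < Int.fract (H j))) :
    IsTheta k n f ∧ ∀ r : ℕ, r ≤ n → (f^[r] 0) / (n : ℤ) = ⌊H r⌋ := by
  have hres : Set.InjOn (fun r => f^[r] 0 % (n : ℤ)) (Set.Iio n) := fun i hi j hj hij => by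
    by_contra hne
    exact hfrac i j hi hj hne ((eq_iff_eq_of_lt_iff_lt (horder i j hi hj) (horder j i hj hi)).1 hij)
  have hres_n : f^[n] 0 % n = 0 := by simpa using iterate_emod_eq_of_injOn hf.1.2 hf.1.1.1 hn hres
  have horder' : ∀ i j, i ≤ n → j ≤ n →
      (f^[i] 0 % n < f^[j] 0 % n ↔ Int.fract (H i) < Int.fract (H j)) :=
    lt_iff_lt_on_Iic_of_apply_eq_apply_zero (u := fun r => f^[r] 0 % (n : ℤ)) hn
      (by simpa using hres_n) (by simp [hH0, hHn]) horder
  have hHstep : ∀ r < n, H r < H (r + 1) ∧ H (r + 1) < H r + 1 := fun r hr =>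
    ⟨by linarith [hinc r hr], by linarith [hinc r hr]⟩
  have hfstep : ∀ r < n, f^[r] 0 < f^[r + 1] 0 ∧ f^[r + 1] 0 < f^[r] 0 + n := by
    intro r hr
    rw [Function.iterate_succ_apply']
    refine lt_map_of_map_emod_ne hf.2 ?_
    rw [← Function.iterate_succ_apply' f, Ne,
      eq_iff_eq_of_lt_iff_lt (horder' _ _ hr (by omega)) (horder' _ _ (by omega) hr)]
    exact fract_ne_of_lt_of_lt (hHstep r hr).1 (hHstep r hr).2
  have hfloor : ∀ r ≤ n, f^[r] 0 / n = ⌊H r⌋ :=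
    ediv_eq_floor_of_emod_lt_iff (fun r => f^[r] 0) H n (by simp [hH0]) hfstep hHstep
      (fun r hr => horder' _ _ (by omega) hr.le)
  have hkn : f^[n] 0 = 0 + k * n := by
    have := Int.mul_ediv_add_emod (f^[n] 0) n
    rw [hfloor n le_rfl, hHn, hres_n, Int.floor_natCast] at this
    linarith
  exact ⟨⟨hf, isCycleMod_of_injOn hn hres, winding_eq_of_iterate_eq hf hn hres hkn⟩, hfloor⟩

/-- Given a concave profile `H = (0 = H_0, …, H_n = k)`, the associated
bounded affine permutation `f_H` (characterized by the condition that the residues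
`f^i(0) mod n`, `0 ≤ i < n`, have the same relative order as the fractional parts `h_i`)
belongs to `Θ_{k,n}` and satisfies `⌊f^r(0)/n⌋ = ⌊H_r⌋` for all `0 ≤ r ≤ n`. -/
theorem positroid_stmt14 (k n : ℕ) (hn : 0 < n) (H : ℕ → ℝ)
    (hH0 : H 0 = 0) (hHn : H n = k)
    (hinc : ∀ i < n, 0 < H (i + 1) - H i ∧ H (i + 1) - H i < 1)
    (hconc : ∀ i j : ℕ, i ≤ j → j < n → H (j + 1) - H j ≤ H (i + 1) - H i)
    (hfrac : ∀ i j : ℕ, i < n → j < n → i ≠ j → Int.fract (H i) ≠ Int.fract (H j))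
    (f : ℤ → ℤ) (hf : IsBAP n f)
    (horder : ∀ i j : ℕ, i < n → j < n →
      ((f^[i] 0) % (n : ℤ) < (f^[j] 0) % (n : ℤ) ↔ Int.fract (H i) < Int.fract (H j))) :
    IsTheta k n f ∧ ∀ r : ℕ, r ≤ n → (f^[r] 0) / (n : ℤ) = ⌊H r⌋ :=
  positroid_stmt14_general k n hn H hH0 hHn hinc hfrac f hf horder
end
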